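/- arXiv:2604.01875 — 8 statements merged into one kernel-verified Lean document; each statement's English description precedes it below -/
import Mathlib

section
/- Let (M,d) be an ultrametric pointed metric space. Then for every sequence (μ_n) of finitely supported functions μ_n : M → ℝ with sup_n ‖μ_n‖ < ∞ (free norm), one has ca(μ_n) ≤ de(μ_n). (This is equivalent to the Lipschitz-free space F(M) being 1-Schur.) -/
open scoped BigOperators

/-- The free norm of a finitely supported function `μ : M → ℝ` over a pointed metric
space `(M, z)`. -/
noncomputable def freeNorm {M : Type*} [MetricSpace M] (z : M) (μ : M →₀ ℝ) : ℝ :=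
  sSup {s | ∃ f : M → ℝ, f z = 0 ∧ LipschitzWith 1 f ∧ s = ∑ x ∈ μ.support, μ x * f x}

/-- `ca(μ_n) = inf_n sup {‖μ_k - μ_l‖ : k, l ≥ n}` computed with the free norm. -/
noncomputable def seqCa {M : Type*} [MetricSpace M] (z : M) (μ : ℕ → M →₀ ℝ) : ℝ :=
  sInf {t | ∃ n : ℕ, t = sSup {s | ∃ k, n ≤ k ∧ ∃ l, n ≤ l ∧ s = freeNorm z (μ k - μ l)}}

/-- `de(μ_n) = sup_f inf_n sup {|⟨μ_k - μ_l, f⟩| : k, l ≥ n}` over `1`-Lipschitz `f`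
vanishing at the base point. -/
noncomputable def seqDe {M : Type*} [MetricSpace M] (z : M) (μ : ℕ → M →₀ ℝ) : ℝ :=
  sSup {t | ∃ f : M → ℝ, f z = 0 ∧ LipschitzWith 1 f ∧
    t = sInf {u | ∃ n : ℕ, u = sSup {s | ∃ k, n ≤ k ∧ ∃ l, n ≤ l ∧
      s = |∑ x ∈ (μ k - μ l).support, (μ k - μ l) x * f x|}}}

/-!
Fix `θ > 1` and enumerate by `σ` the base point and the (countably many) points of the supports.
In an ultrametric space the closed balls of radius `θ ^ k` partition the space; giving the balls
of level `k` the weight `(θ ^ (k + 1) - θ ^ k) / 2`, a finitely supported `ν` is sent to the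
family of its weighted ball masses relative to `z`. The `ℓ¹` norm of this family dominates
`‖ν‖`: telescope a `1`-Lipschitz `f` through approximations that are constant on the balls of
each level. Conversely, every sign pattern `ε` on the balls yields the `θ`-Lipschitz function
`∑ ε_c w_c (𝟙_c - 𝟙_c(z))`, which pairs with `ν` as `ε` pairs with its coordinates, so the
`ℓ¹` norm is at most `θ ‖ν‖`. Hence `F(M)` is `θ`-isomorphic to a subspace of `ℓ¹`, which is
`1`-Schur by a gliding hump argument: one sign pattern almost norms infinitely many terms of
any bounded sequence. Letting `θ → 1` gives the claim.
-/

open Filter Topology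

lemma le_of_forall_one_lt_le_mul_add {a b : ℝ} (h : ∀ θ > 1, ∀ η > 0, a ≤ θ * b + η) : a ≤ b := by
  have hlim : Tendsto (fun θ : ℝ => θ * b) (𝓝[>] 1) (𝓝 b) :=
    ((continuous_mul_const b).tendsto' 1 b (one_mul b)).mono_left nhdsWithin_le_nhds
  exact ge_of_tendsto hlim <| eventually_nhdsWithin_of_forall fun θ hθ =>
    le_of_forall_pos_le_add (h θ hθ)

lemma sum_zpow_succ_sub_le {θ : ℝ} (hθ : 1 ≤ θ) {K : Finset ℤ} {m : ℤ} (hK : ∀ k ∈ K, k ≤ m) :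
    ∑ k ∈ K, (θ ^ (k + 1) - θ ^ k) ≤ θ ^ (m + 1) := by
  have hθ0 : 0 < θ := zero_lt_one.trans_le hθ
  induction K using Finset.induction_on_max generalizing m with
  | empty => simpa using (zpow_pos hθ0 _).le
  | insert a K hlt ih =>
    have hK' : ∑ k ∈ K, (θ ^ (k + 1) - θ ^ k) ≤ θ ^ a := by
      simpa using ih fun k hk => Int.le_sub_one_of_lt (hlt k hk)
    have ham : a + 1 ≤ m + 1 := by linarith [hK a (Finset.mem_insert_self a K)]
    rw [Finset.sum_insert fun ha => (hlt a ha).false]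
    linarith [zpow_le_zpow_right₀ hθ ham]

lemma sum_zpow_succ_sub_le_mul {θ d : ℝ} (hθ : 1 ≤ θ) (hd : 0 ≤ d) {K : Finset ℤ}
    (hK : ∀ k ∈ K, θ ^ k < d) : ∑ k ∈ K, (θ ^ (k + 1) - θ ^ k) ≤ θ * d := by
  rcases K.eq_empty_or_nonempty with rfl | hne
  · simpa using mul_nonneg (zero_le_one.trans hθ) hd
  calc ∑ k ∈ K, (θ ^ (k + 1) - θ ^ k) ≤ θ ^ (K.max' hne + 1) :=
        sum_zpow_succ_sub_le hθ fun k hk => K.le_max' k hk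
    _ = θ * θ ^ K.max' hne := by rw [zpow_add_one₀ (zero_lt_one.trans_le hθ).ne', mul_comm]
    _ ≤ θ * d := mul_le_mul_of_nonneg_left (hK _ (K.max'_mem hne)).le (zero_le_one.trans hθ)

lemma exists_forall_le_zpow_add {α : Type*} {θ : ℝ} (hθ : 1 < θ) (k₀ : ℤ) (A : Finset α)
    (g : α → ℝ) : ∃ L : ℕ, ∀ x ∈ A, g x ≤ θ ^ (k₀ + L) := by
  have hθk : 0 < θ ^ k₀ := zpow_pos (zero_lt_one.trans hθ) k₀
  obtain ⟨L, hL⟩ := pow_unbounded_of_one_lt ((∑ x ∈ A, |g x|) / θ ^ k₀) hθ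
  refine ⟨L, fun x hx => ?_⟩
  rw [zpow_add₀ (zero_lt_one.trans hθ).ne', zpow_natCast, ← div_le_iff₀' hθk]
  exact le_trans (div_le_div_of_nonneg_right ((le_abs_self _).trans
    (Finset.single_le_sum (fun y _ => abs_nonneg (g y)) hx)) hθk.le) hL.le

lemma exists_lt_eq_of_subset_range {M : Type*} {σ : ℕ → M} {A : Finset M}
    (hA : ∀ x ∈ A, x ∈ Set.range σ) : ∃ N, ∀ x ∈ A, ∃ n < N, σ n = x := by
  choose! g hg using hA
  exact ⟨A.sup g + 1, fun x hx => ⟨g x, Nat.lt_succ_of_le (Finset.le_sup hx), hg x hx⟩⟩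

lemma sum_range_sum_range_le_tsum {g : ℤ × ℕ → ℝ} (hg0 : ∀ c, 0 ≤ g c) (hg : Summable g)
    (k₀ : ℤ) (L N : ℕ) :
    ∑ j ∈ Finset.range L, ∑ i ∈ Finset.range N, g (k₀ + j, i) ≤ ∑' c, g c := by
  have hinj : Function.Injective fun p : ℕ × ℕ => ((k₀ + p.1 : ℤ), p.2) := fun p q h => by
    simp only [Prod.mk.injEq, add_right_inj, Nat.cast_inj] at h
    exact Prod.ext h.1 h.2
  rw [← Finset.sum_product' (f := fun (j i : ℕ) => g (k₀ + j, i)),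
    ← Finset.sum_image (g := fun p : ℕ × ℕ => ((k₀ + p.1 : ℤ), p.2)) (f := g)
      fun p _ q _ h => hinj h]
  exact hg.sum_le_tsum _ fun c _ => hg0 c

def pairTail (a : ℕ → ℕ → ℝ) (n : ℕ) : Set ℝ := {s | ∃ k, n ≤ k ∧ ∃ l, n ≤ l ∧ s = a k l}

noncomputable def pairLimsup (a : ℕ → ℕ → ℝ) : ℝ := sInf {t | ∃ n : ℕ, t = sSup (pairTail a n)}

section pairLimsup

variable {a : ℕ → ℕ → ℝ} {B : ℝ}

lemma pairTail_nonempty (n : ℕ) : (pairTail a n).Nonempty := ⟨a n n, n, le_rfl, n, le_rfl, rfl⟩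

lemma bddAbove_pairTail (hB : ∀ k l, a k l ≤ B) (n : ℕ) : BddAbove (pairTail a n) :=
  ⟨B, by rintro s ⟨k, -, l, -, rfl⟩; exact hB k l⟩

lemma pairLimsup_le_sSup_pairTail (h0 : ∀ k l, 0 ≤ a k l) (hB : ∀ k l, a k l ≤ B) (n : ℕ) :
    pairLimsup a ≤ sSup (pairTail a n) := by
  refine csInf_le ⟨0, ?_⟩ ⟨n, rfl⟩
  rintro t ⟨m, rfl⟩
  exact (h0 m m).trans (le_csSup (bddAbove_pairTail hB m) ⟨m, le_rfl, m, le_rfl, rfl⟩)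

lemma pairLimsup_le (h0 : ∀ k l, 0 ≤ a k l) (hB : ∀ k l, a k l ≤ B) : pairLimsup a ≤ B :=
  (pairLimsup_le_sSup_pairTail h0 hB 0).trans <| csSup_le (pairTail_nonempty 0) <| by
    rintro s ⟨k, -, l, -, rfl⟩; exact hB k l

lemma exists_lt_of_lt_pairLimsup (h0 : ∀ k l, 0 ≤ a k l) (hB : ∀ k l, a k l ≤ B) {t : ℝ}
    (ht : t < pairLimsup a) (n : ℕ) : ∃ k, n ≤ k ∧ ∃ l, n ≤ l ∧ t < a k l := by
  obtain ⟨_, ⟨k, hk, l, hl, rfl⟩, hlt⟩ := exists_lt_of_lt_csSup (pairTail_nonempty n)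
    (ht.trans_le (pairLimsup_le_sSup_pairTail h0 hB n))
  exact ⟨k, hk, l, hl, hlt⟩

lemma le_pairLimsup (hB : ∀ k l, a k l ≤ B) {t : ℝ}
    (ht : ∀ n, ∃ k, n ≤ k ∧ ∃ l, n ≤ l ∧ t ≤ a k l) : t ≤ pairLimsup a := by
  refine le_csInf ⟨_, 0, rfl⟩ ?_
  rintro _ ⟨n, rfl⟩
  obtain ⟨k, hk, l, hl, htkl⟩ := ht n
  exact htkl.trans (le_csSup (bddAbove_pairTail hB n) ⟨k, hk, l, hl, rfl⟩)

end pairLimsup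

section Pairing

variable {M : Type*}

noncomputable def pairing (ν : M →₀ ℝ) : (M → ℝ) →ₗ[ℝ] ℝ where
  toFun f := ∑ x ∈ ν.support, ν x * f x
  map_add' f g := by simp only [Pi.add_apply, mul_add, Finset.sum_add_distrib]
  map_smul' r f := by
    simp only [Pi.smul_apply, smul_eq_mul, RingHom.id_apply, Finset.mul_sum]
    exact Finset.sum_congr rfl fun _ _ => by ring

lemma pairing_apply (ν : M →₀ ℝ) (f : M → ℝ) : pairing ν f = ∑ x ∈ ν.support, ν x * f x := rfl

lemma pairing_sub (μ ν : M →₀ ℝ) (f : M → ℝ) : pairing (μ - ν) f = pairing μ f - pairing ν f :=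
  Finsupp.sum_sub_index (h := fun x m => m * f x) fun _ _ _ => sub_mul _ _ _

lemma pairing_congr {ν : M →₀ ℝ} {f g : M → ℝ} (h : ∀ x ∈ ν.support, f x = g x) :
    pairing ν f = pairing ν g :=
  Finset.sum_congr rfl fun x hx => by rw [h x hx]

lemma pairing_add (ν : M →₀ ℝ) (f g : M → ℝ) :
    pairing ν (fun x => f x + g x) = pairing ν f + pairing ν g :=
  map_add (pairing ν) f g

lemma pairing_const_mul (ν : M →₀ ℝ) (a : ℝ) (f : M → ℝ) :
    pairing ν (fun x => a * f x) = a * pairing ν f :=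
  map_smul (pairing ν) a f

lemma pairing_sum {ι : Type*} (ν : M →₀ ℝ) (s : Finset ι) (g : ι → M → ℝ) :
    pairing ν (fun x => ∑ i ∈ s, g i x) = ∑ i ∈ s, pairing ν (g i) := by
  simp only [pairing_apply, Finset.mul_sum]
  exact Finset.sum_comm

lemma pairing_tsum {ι : Type*} (ν : M →₀ ℝ) {g : ι → M → ℝ} (hg : ∀ x, Summable fun c => g c x) :
    pairing ν (fun x => ∑' c, g c x) = ∑' c, pairing ν (g c) := by
  simp only [pairing_apply, ← tsum_mul_left]
  exact (Summable.tsum_finsetSum fun x _ => (hg x).mul_left (ν x)).symm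

variable [MetricSpace M] {z : M}

lemma le_freeNorm (ν : M →₀ ℝ) {f : M → ℝ} (hf0 : f z = 0) (hf : LipschitzWith 1 f) :
    pairing ν f ≤ freeNorm z ν := by
  refine le_csSup ⟨∑ x ∈ ν.support, |ν x| * dist x z, ?_⟩ ⟨f, hf0, hf, rfl⟩
  rintro _ ⟨g, hg0, hg, rfl⟩
  refine Finset.sum_le_sum fun x _ => (le_abs_self _).trans ?_
  rw [abs_mul]
  refine mul_le_mul_of_nonneg_left ?_ (abs_nonneg _)
  simpa [hg0, Real.dist_eq] using hg.dist_le_mul x z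

lemma abs_pairing_le_freeNorm (ν : M →₀ ℝ) {f : M → ℝ} (hf0 : f z = 0) (hf : LipschitzWith 1 f) :
    |pairing ν f| ≤ freeNorm z ν := by
  refine abs_le.mpr ⟨?_, le_freeNorm ν hf0 hf⟩
  have := le_freeNorm (z := z) ν (f := -f) (by simp only [Pi.neg_apply, hf0, neg_zero]) hf.neg
  rw [map_neg] at this
  linarith

lemma freeNorm_nonneg (ν : M →₀ ℝ) : 0 ≤ freeNorm z ν := by
  simpa using le_freeNorm (z := z) ν (f := 0) rfl (LipschitzWith.const' 0)

lemma freeNorm_le {ν : M →₀ ℝ} {B : ℝ}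
    (h : ∀ f : M → ℝ, f z = 0 → LipschitzWith 1 f → pairing ν f ≤ B) : freeNorm z ν ≤ B :=
  csSup_le ⟨_, fun _ => 0, rfl, LipschitzWith.const' 0, rfl⟩ fun _ ⟨f, hf0, hf, hs⟩ =>
    hs ▸ h f hf0 hf

end Pairing

section SignNorming

variable {ι : Type*}

lemma abs_mul_le_of_abs_le_one {e : ℝ} (he : |e| ≤ 1) (t : ℝ) : |e * t| ≤ |t| := by
  rw [abs_mul]; exact mul_le_of_le_one_left (abs_nonneg _) he

lemma abs_sign_le_one (x : ℝ) : |(SignType.sign x : ℝ)| ≤ 1 := by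
  rcases lt_trichotomy x 0 with h | rfl | h <;> simp [*]

lemma abs_sub_mul_le_of_abs_le_one {e : ℝ} (he : |e| ≤ 1) (s t : ℝ) :
    |t| - e * t ≤ 2 * |t - s| + (|s| - e * s) := by
  have h1 := abs_mul_le_of_abs_le_one he (t - s)
  have h2 := neg_abs_le (e * (t - s))
  rw [mul_sub] at h1 h2
  linarith [abs_sub_abs_le_abs_sub t s]

lemma sum_abs_sub_mul_le_two_mul {ε b : ι → ℝ} {F H : Finset ι} {δ : ℝ} (hε : ∀ c, |ε c| ≤ 1)
    (hF : ∀ c ∈ H, c ∈ F → ε c * b c = |b c|)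
    (htail : ∀ G : Finset ι, Disjoint G F → ∑ c ∈ G, |b c| ≤ δ) :
    ∑ c ∈ H, (|b c| - ε c * b c) ≤ 2 * δ := by
  classical
  rw [← Finset.sum_filter_add_sum_filter_not H (· ∈ F)]
  have hin : ∑ c ∈ H with c ∈ F, (|b c| - ε c * b c) = 0 :=
    Finset.sum_eq_zero fun c hc => by
      obtain ⟨hcH, hcF⟩ := Finset.mem_filter.mp hc
      rw [hF c hcH hcF, sub_self]
  have hout : ∑ c ∈ H with c ∉ F, (|b c| - ε c * b c) ≤ 2 * ∑ c ∈ H with c ∉ F, |b c| := by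
    rw [Finset.mul_sum]
    exact Finset.sum_le_sum fun c _ => by
      linarith [neg_abs_le (ε c * b c), abs_mul_le_of_abs_le_one (hε c) (b c)]
  have hdisj : Disjoint (H.filter (· ∉ F)) F :=
    Finset.disjoint_left.mpr fun c hc => (Finset.mem_filter.mp hc).2
  rw [hin, zero_add]
  linarith [htail _ hdisj]

lemma sum_abs_sub_mul_le_six_mul {ε x b : ι → ℝ} {F₀ S S' : Finset ι} {δ : ℝ}
    (hε : ∀ c, |ε c| ≤ 1) (hF₀ : ∀ c ∈ F₀, ε c * b c = |b c|)
    (hb : ∀ G : Finset ι, Disjoint G F₀ → ∑ c ∈ G, |b c| ≤ δ)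
    (hxb : ∑ c ∈ S, |x c - b c| ≤ δ) (hS' : ∀ c ∈ S', c ∉ S → ε c * x c = |x c|)
    (hx : ∀ G : Finset ι, Disjoint G S' → ∑ c ∈ G, |x c| ≤ δ) (G : Finset ι) :
    ∑ c ∈ G, (|x c| - ε c * x c) ≤ 6 * δ := by
  classical
  rw [← Finset.sum_filter_add_sum_filter_not G (· ∈ S)]
  have hnear : ∑ c ∈ G with c ∈ S, (|x c| - ε c * x c)
      ≤ ∑ c ∈ G with c ∈ S, (2 * |x c - b c| + (|b c| - ε c * b c)) :=
    Finset.sum_le_sum fun c _ => abs_sub_mul_le_of_abs_le_one (hε c) (b c) (x c)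
  have hxb' : ∑ c ∈ G with c ∈ S, |x c - b c| ≤ δ :=
    le_trans (Finset.sum_le_sum_of_subset_of_nonneg
      (fun c hc => (Finset.mem_filter.mp hc).2) fun c _ _ => abs_nonneg _) hxb
  have hbG := sum_abs_sub_mul_le_two_mul (H := G.filter (· ∈ S)) hε (fun c _ hc => hF₀ c hc) hb
  have hfar := sum_abs_sub_mul_le_two_mul (H := G.filter (· ∉ S)) hε
    (fun c hc hcS' => hS' c hcS' (Finset.mem_filter.mp hc).2) hx
  rw [Finset.sum_add_distrib, ← Finset.mul_sum] at hnear
  linarith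

lemma tsum_abs_le_tsum_mul_add {x ε : ι → ℝ} (hx : Summable fun c => |x c|)
    (hε : ∀ c, |ε c| ≤ 1) {D : ℝ} (hD : ∀ G : Finset ι, ∑ c ∈ G, (|x c| - ε c * x c) ≤ D) :
    ∑' c, |x c| ≤ ∑' c, ε c * x c + D := by
  have hεx : Summable fun c => ε c * x c :=
    hx.of_norm_bounded fun c => abs_mul_le_of_abs_le_one (hε c) (x c)
  have hdef : ∑' c, (|x c| - ε c * x c) ≤ D := (hx.sub hεx).tsum_le_of_sum_le hD
  rw [hx.tsum_sub hεx] at hdef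
  linarith

lemma exists_subseq_tendsto_pi [Countable ι] {a : ℕ → ι → ℝ} {B : ℝ}
    (hB : ∀ j c, |a j c| ≤ B) :
    ∃ b : ι → ℝ, ∃ φ : ℕ → ℕ, StrictMono φ ∧
      ∀ c, Tendsto (fun p => a (φ p) c) atTop (𝓝 (b c)) := by
  obtain ⟨b, -, φ, hφ, hlim⟩ :=
    (isCompact_univ_pi fun _ : ι => isCompact_Icc (a := -B) (b := B)).tendsto_subseq (x := a)
      fun j => Set.mem_univ_pi.mpr fun c => abs_le.mp (hB j c)
  exact ⟨b, φ, hφ, tendsto_pi_nhds.mp hlim⟩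

lemma sum_abs_le_of_tendsto {a : ℕ → ι → ℝ} {b : ι → ℝ} {B : ℝ}
    (hab : ∀ c, Tendsto (fun j => a j c) atTop (𝓝 (b c)))
    (hB : ∀ j (F : Finset ι), ∑ c ∈ F, |a j c| ≤ B) (F : Finset ι) :
    ∑ c ∈ F, |b c| ≤ B :=
  le_of_tendsto' (tendsto_finsetSum F fun c _ => (hab c).abs) fun j => hB j F

lemma exists_gliding_hump {a : ℕ → ι → ℝ} {b : ι → ℝ}
    (hab : ∀ c, Tendsto (fun j => a j c) atTop (𝓝 (b c)))
    (ha : ∀ j, Summable fun c => |a j c|) {δ : ℝ} (hδ : 0 < δ) (F₀ : Finset ι) :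
    ∃ (p : ℕ → ℕ) (S : ℕ → Finset ι), S 0 = F₀ ∧ Monotone S ∧ (∀ i, i ≤ p i) ∧
      (∀ i, ∑ c ∈ S i, |a (p i) c - b c| ≤ δ) ∧
      ∀ i (G : Finset ι), Disjoint G (S (i + 1)) → ∑ c ∈ G, |a (p i) c| ≤ δ := by
  classical
  have hnext : ∀ (i : ℕ) (T : Finset ι), ∃ p, i ≤ p ∧ ∑ c ∈ T, |a p c - b c| ≤ δ := by
    intro i T
    have hlim : Tendsto (fun j => ∑ c ∈ T, |a j c - b c|) atTop (𝓝 0) := by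
      simpa using tendsto_finsetSum T fun c _ => ((hab c).sub_const (b c)).abs
    exact ((eventually_ge_atTop i).and (hlim.eventually (Iic_mem_nhds hδ))).exists
  choose P hPi hP using hnext
  have htail : ∀ j, ∃ T : Finset ι, ∀ G : Finset ι, Disjoint G T → ∑ c ∈ G, |a j c| ≤ δ :=
    fun j => (ha j).vanishing (Iic_mem_nhds hδ)
  choose T hT using htail
  let S : ℕ → Finset ι := fun i => Nat.rec F₀ (fun i S => S ∪ T (P i S)) i
  refine ⟨fun i => P i (S i), S, rfl, monotone_nat_of_le_succ fun i => Finset.subset_union_left,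
    fun i => hPi i (S i), fun i => hP i (S i), fun i G hG => hT _ G ?_⟩
  exact hG.mono_right Finset.subset_union_right

open Classical in
noncomputable def humpSign (a : ℕ → ι → ℝ) (b : ι → ℝ) (p : ℕ → ℕ) (S : ℕ → Finset ι)
    (c : ι) : ℝ :=
  if h : ∃ i, c ∈ S i then
    if Nat.find h = 0 then SignType.sign (b c) else SignType.sign (a (p (Nat.find h - 1)) c)
  else 0

section humpSign

variable {a : ℕ → ι → ℝ} {b : ι → ℝ} {p : ℕ → ℕ} {S : ℕ → Finset ι}

lemma abs_humpSign_le_one (c : ι) : |humpSign a b p S c| ≤ 1 := by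
  unfold humpSign
  split_ifs <;> simp [abs_sign_le_one]

lemma humpSign_of_mem_zero {c : ι} (hc : c ∈ S 0) :
    humpSign a b p S c = SignType.sign (b c) := by
  classical
  have h : ∃ i, c ∈ S i := ⟨0, hc⟩
  rw [humpSign, dif_pos h, if_pos ((Nat.find_eq_zero h).mpr hc)]

lemma humpSign_of_mem_succ_of_notMem (hS : Monotone S) {c : ι} {i : ℕ} (hc : c ∈ S (i + 1))
    (hci : c ∉ S i) : humpSign a b p S c = SignType.sign (a (p i) c) := by
  classical
  have h : ∃ i, c ∈ S i := ⟨i + 1, hc⟩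
  have hfind : Nat.find h = i + 1 :=
    (Nat.find_eq_iff h).mpr ⟨hc, fun n hn hcn => hci (hS (Nat.lt_succ_iff.mp hn) hcn)⟩
  rw [humpSign, dif_pos h, hfind, if_neg (Nat.succ_ne_zero i), Nat.add_sub_cancel]

end humpSign

theorem exists_sign_frequently_tsum_abs_le [Countable ι] {a : ℕ → ι → ℝ} {B : ℝ}
    (hB : ∀ j (F : Finset ι), ∑ c ∈ F, |a j c| ≤ B) {η : ℝ} (hη : 0 < η) :
    ∃ ε : ι → ℝ, (∀ c, |ε c| ≤ 1) ∧
      ∃ᶠ j in atTop, ∑' c, |a j c| ≤ ∑' c, ε c * a j c + η := by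
  have hsum : ∀ j, Summable fun c => |a j c| :=
    fun j => summable_of_sum_le (fun _ => abs_nonneg _) (hB j)
  obtain ⟨b, φ, hφ, hlim⟩ := exists_subseq_tendsto_pi (B := B) fun j c => by
    simpa using hB j {c}
  have hb : Summable fun c => |b c| :=
    summable_of_sum_le (fun _ => abs_nonneg _) (sum_abs_le_of_tendsto hlim fun j => hB (φ j))
  have hδ : 0 < η / 6 := by positivity
  obtain ⟨F₀, hF₀⟩ := hb.vanishing (Iic_mem_nhds hδ)
  obtain ⟨p, S, hS0, hS, hp, hpS, hpT⟩ := exists_gliding_hump hlim (fun j => hsum (φ j)) hδ F₀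
  refine ⟨humpSign (a ∘ φ) b p S, abs_humpSign_le_one, frequently_atTop.mpr fun n =>
    ⟨φ (p n), (hp n).trans hφ.le_apply, ?_⟩⟩
  have hdefect := sum_abs_sub_mul_le_six_mul (x := a (φ (p n))) (S' := S (n + 1))
    (abs_humpSign_le_one (a := a ∘ φ) (p := p))
    (fun c hc => by rw [humpSign_of_mem_zero (hS0 ▸ hc), sign_mul_self]) hF₀ (hpS n)
    (fun c hc hcn => by
      rw [humpSign_of_mem_succ_of_notMem hS hc hcn, Function.comp_apply, sign_mul_self])
    (hpT n)
  have := tsum_abs_le_tsum_mul_add (hsum _) abs_humpSign_le_one hdefect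
  linarith

end SignNorming

section Cells

variable {M : Type*} [MetricSpace M]

def IsLeastCenter (σ : ℕ → M) (r : ℝ) (i : ℕ) : Prop := ∀ j < i, r < dist (σ j) (σ i)

/- In an ultrametric space the cells of a fixed radius are pairwise disjoint, and every closed
`r`-ball meeting `range σ` is exactly one of them, labelled by the least index of a point in it. -/
def cell (σ : ℕ → M) (r : ℝ) (i : ℕ) : Set M := {x | IsLeastCenter σ r i ∧ dist (σ i) x ≤ r}

noncomputable def cellIndicator (σ : ℕ → M) (r : ℝ) (i : ℕ) : M → ℝ := (cell σ r i).indicator 1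

variable {σ : ℕ → M} {r : ℝ}

lemma cellIndicator_of_mem {x : M} {i : ℕ} (hx : x ∈ cell σ r i) : cellIndicator σ r i x = 1 :=
  Set.indicator_of_mem hx 1

lemma cellIndicator_of_notMem {x : M} {i : ℕ} (hx : x ∉ cell σ r i) :
    cellIndicator σ r i x = 0 :=
  Set.indicator_of_notMem hx 1

lemma cellIndicator_nonneg (i : ℕ) (x : M) : 0 ≤ cellIndicator σ r i x :=
  Set.indicator_nonneg (fun _ _ => zero_le_one) x

variable [IsUltrametricDist M]

lemma mem_cell_iff_of_dist_le {x y : M} (h : dist x y ≤ r) (i : ℕ) :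
    x ∈ cell σ r i ↔ y ∈ cell σ r i :=
  and_congr_right fun _ =>
    ⟨fun hx => (IsUltrametricDist.dist_triangle_max _ x _).trans (max_le hx h),
      fun hy => (IsUltrametricDist.dist_triangle_max _ y _).trans (max_le hy (dist_comm x y ▸ h))⟩

lemma eq_of_mem_cell {x : M} {i j : ℕ} (hi : x ∈ cell σ r i) (hj : x ∈ cell σ r j) : i = j := by
  have key : ∀ {i j}, x ∈ cell σ r i → x ∈ cell σ r j → ¬ i < j := fun hi hj hij =>
    (hj.1 _ hij).not_ge <|
      (IsUltrametricDist.dist_triangle_max _ x _).trans (max_le hi.2 (dist_comm x _ ▸ hj.2))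
  exact le_antisymm (not_lt.mp (key hj hi)) (not_lt.mp (key hi hj))

lemma exists_le_mem_cell (hr : 0 ≤ r) (n : ℕ) : ∃ i ≤ n, σ n ∈ cell σ r i := by
  classical
  have h : ∃ i, dist (σ i) (σ n) ≤ r := ⟨n, by simpa using hr⟩
  refine ⟨Nat.find h, Nat.find_min' h (by simpa using hr), fun j hj => ?_, Nat.find_spec h⟩
  by_contra! hjr
  exact Nat.find_min h hj <|
    (IsUltrametricDist.dist_triangle_max _ _ _).trans (max_le hjr (Nat.find_spec h))

lemma cellIndicator_eq_of_dist_le {x y : M} (h : dist x y ≤ r) (i : ℕ) :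
    cellIndicator σ r i x = cellIndicator σ r i y := by
  classical
  simp only [cellIndicator, Set.indicator_apply, mem_cell_iff_of_dist_le h i, Pi.one_apply]

lemma sum_mul_cellIndicator (hr : 0 ≤ r) {h : M → ℝ} (hh : ∀ x y, dist x y ≤ r → h x = h y)
    {n N : ℕ} (hn : n < N) :
    ∑ i ∈ Finset.range N, h (σ i) * cellIndicator σ r i (σ n) = h (σ n) := by
  obtain ⟨i, hin, hi⟩ := exists_le_mem_cell (σ := σ) hr n
  rw [Finset.sum_eq_single_of_mem i (Finset.mem_range.mpr (hin.trans_lt hn)),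
    cellIndicator_of_mem hi, mul_one, hh _ _ hi.2]
  intro j _ hji
  rw [cellIndicator_of_notMem fun hj => hji (eq_of_mem_cell hj hi), mul_zero]

lemma sum_cellIndicator_le_one (I : Finset ℕ) (x : M) : ∑ i ∈ I, cellIndicator σ r i x ≤ 1 := by
  classical
  simp only [cellIndicator, Set.indicator_apply, Pi.one_apply, Finset.sum_boole]
  exact_mod_cast Finset.card_le_one.mpr fun i hi j hj =>
    eq_of_mem_cell (Finset.mem_filter.mp hi).2 (Finset.mem_filter.mp hj).2

lemma sum_abs_cellIndicator_sub_le (I : Finset ℕ) (u v : M) :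
    ∑ i ∈ I, |cellIndicator σ r i u - cellIndicator σ r i v| ≤ 2 := by
  have hle : ∀ i ∈ I, |cellIndicator σ r i u - cellIndicator σ r i v|
      ≤ cellIndicator σ r i u + cellIndicator σ r i v := fun i _ =>
    (abs_sub _ _).trans_eq <| by
      rw [abs_of_nonneg (cellIndicator_nonneg i u), abs_of_nonneg (cellIndicator_nonneg i v)]
  have := Finset.sum_le_sum hle
  rw [Finset.sum_add_distrib] at this
  linarith [sum_cellIndicator_le_one (σ := σ) (r := r) I u,
    sum_cellIndicator_le_one (σ := σ) (r := r) I v]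

end Cells

noncomputable def levelWeight (θ : ℝ) (k : ℤ) : ℝ := (θ ^ (k + 1) - θ ^ k) / 2

lemma levelWeight_pos {θ : ℝ} (hθ : 1 < θ) (k : ℤ) : 0 < levelWeight θ k := by
  have := zpow_lt_zpow_right₀ hθ (lt_add_one k)
  unfold levelWeight; linarith

section CellFun

variable {M : Type*} [MetricSpace M] {θ : ℝ} {σ : ℕ → M} {z : M}

noncomputable def cellFun (θ : ℝ) (σ : ℕ → M) (z : M) (c : ℤ × ℕ) (x : M) : ℝ :=
  levelWeight θ c.1 * (cellIndicator σ (θ ^ c.1) c.2 x - cellIndicator σ (θ ^ c.1) c.2 z)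

@[simp]
lemma cellFun_base (c : ℤ × ℕ) : cellFun θ σ z c z = 0 := by
  rw [cellFun, sub_self, mul_zero]

variable [IsUltrametricDist M]

lemma sum_abs_cellFun_sub_le (hθ : 1 < θ) (u v : M) (P : Finset (ℤ × ℕ)) :
    ∑ c ∈ P, |cellFun θ σ z c u - cellFun θ σ z c v| ≤ θ * dist u v := by
  classical
  let K := (P.image Prod.fst).filter (θ ^ · < dist u v)
  have hsub : P.filter (fun c => θ ^ c.1 < dist u v) ⊆ K ×ˢ P.image Prod.snd := fun c hc => by
    obtain ⟨hcP, hc⟩ := Finset.mem_filter.mp hc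
    exact Finset.mem_product.mpr ⟨Finset.mem_filter.mpr ⟨Finset.mem_image_of_mem _ hcP, hc⟩,
      Finset.mem_image_of_mem _ hcP⟩
  have hterm : ∀ c : ℤ × ℕ, |cellFun θ σ z c u - cellFun θ σ z c v| = levelWeight θ c.1 *
      |cellIndicator σ (θ ^ c.1) c.2 u - cellIndicator σ (θ ^ c.1) c.2 v| := fun c => by
    rw [cellFun, cellFun, ← mul_sub, abs_mul, abs_of_pos (levelWeight_pos hθ c.1),
      sub_sub_sub_cancel_right]
  calc ∑ c ∈ P, |cellFun θ σ z c u - cellFun θ σ z c v|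
      = ∑ c ∈ P with θ ^ c.1 < dist u v, |cellFun θ σ z c u - cellFun θ σ z c v| := by
        refine (Finset.sum_filter_of_ne fun c _ hc => ?_).symm
        by_contra! hle
        rw [hterm, cellIndicator_eq_of_dist_le hle, sub_self, abs_zero, mul_zero] at hc
        exact hc rfl
    _ ≤ ∑ c ∈ K ×ˢ P.image Prod.snd, |cellFun θ σ z c u - cellFun θ σ z c v| :=
        Finset.sum_le_sum_of_subset_of_nonneg hsub fun _ _ _ => abs_nonneg _
    _ = ∑ k ∈ K, levelWeight θ k * ∑ i ∈ P.image Prod.snd,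
          |cellIndicator σ (θ ^ k) i u - cellIndicator σ (θ ^ k) i v| := by
        simp only [Finset.sum_product, hterm, Finset.mul_sum]
    _ ≤ ∑ k ∈ K, (θ ^ (k + 1) - θ ^ k) :=
        Finset.sum_le_sum fun k _ => by
          have := mul_le_mul_of_nonneg_left (sum_abs_cellIndicator_sub_le (σ := σ)
            (r := θ ^ k) (P.image Prod.snd) u v) (levelWeight_pos hθ k).le
          unfold levelWeight at this ⊢
          linarith
    _ ≤ θ * dist u v :=
        sum_zpow_succ_sub_le_mul hθ.le dist_nonneg fun k hk => (Finset.mem_filter.mp hk).2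

end CellFun

section SignedFun

variable {M : Type*} [MetricSpace M] {θ : ℝ} {σ : ℕ → M} {z : M} {ε : ℤ × ℕ → ℝ}

noncomputable def signedFun (θ : ℝ) (σ : ℕ → M) (z : M) (ε : ℤ × ℕ → ℝ) (x : M) : ℝ :=
  ∑' c, ε c * cellFun θ σ z c x

lemma signedFun_base : signedFun θ σ z ε z = 0 := by
  simp [signedFun]

noncomputable def cellCoord (θ : ℝ) (σ : ℕ → M) (z : M) (ν : M →₀ ℝ) (c : ℤ × ℕ) : ℝ :=
  pairing ν (cellFun θ σ z c)

variable [IsUltrametricDist M]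

lemma summable_abs_cellFun_sub (hθ : 1 < θ) (u v : M) :
    Summable fun c => |cellFun θ σ z c u - cellFun θ σ z c v| :=
  summable_of_sum_le (fun _ => abs_nonneg _) (sum_abs_cellFun_sub_le hθ u v)

lemma summable_mul_cellFun_sub (hθ : 1 < θ) (hε : ∀ c, |ε c| ≤ 1) (u v : M) :
    Summable fun c => ε c * (cellFun θ σ z c u - cellFun θ σ z c v) :=
  (summable_abs_cellFun_sub hθ u v).of_norm_bounded fun c => abs_mul_le_of_abs_le_one (hε c) _

lemma summable_mul_cellFun (hθ : 1 < θ) (hε : ∀ c, |ε c| ≤ 1) (x : M) :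
    Summable fun c => ε c * cellFun θ σ z c x := by
  simpa using summable_mul_cellFun_sub (σ := σ) (z := z) hθ hε x z

lemma abs_signedFun_sub_le (hθ : 1 < θ) (hε : ∀ c, |ε c| ≤ 1) (u v : M) :
    |signedFun θ σ z ε u - signedFun θ σ z ε v| ≤ θ * dist u v := by
  rw [signedFun, signedFun, ← (summable_mul_cellFun hθ hε u).tsum_sub
    (summable_mul_cellFun hθ hε v)]
  simp only [← mul_sub]
  calc |∑' c, ε c * (cellFun θ σ z c u - cellFun θ σ z c v)|
      ≤ ∑' c, |ε c * (cellFun θ σ z c u - cellFun θ σ z c v)| :=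
        norm_tsum_le_tsum_norm (summable_mul_cellFun_sub hθ hε u v).norm
    _ ≤ ∑' c, |cellFun θ σ z c u - cellFun θ σ z c v| :=
        (summable_mul_cellFun_sub hθ hε u v).abs.tsum_le_tsum
          (fun c => abs_mul_le_of_abs_le_one (hε c) _) (summable_abs_cellFun_sub hθ u v)
    _ ≤ θ * dist u v :=
        (summable_abs_cellFun_sub hθ u v).tsum_le_of_sum_le (sum_abs_cellFun_sub_le hθ u v)

lemma lipschitzWith_inv_mul_signedFun (hθ : 1 < θ) (hε : ∀ c, |ε c| ≤ 1) :
    LipschitzWith 1 fun x => θ⁻¹ * signedFun θ σ z ε x := by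
  have hθ0 : 0 < θ := zero_lt_one.trans hθ
  refine LipschitzWith.of_dist_le_mul fun u v => ?_
  rw [Real.dist_eq, ← mul_sub, abs_mul, abs_of_pos (inv_pos.mpr hθ0), NNReal.coe_one, one_mul,
    inv_mul_le_iff₀ hθ0]
  exact abs_signedFun_sub_le hθ hε u v

lemma pairing_signedFun (hθ : 1 < θ) (hε : ∀ c, |ε c| ≤ 1) (ν : M →₀ ℝ) :
    pairing ν (signedFun θ σ z ε) = ∑' c, ε c * cellCoord θ σ z ν c := by
  rw [show signedFun θ σ z ε = fun x => ∑' c, ε c * cellFun θ σ z c x from rfl,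
    pairing_tsum ν (summable_mul_cellFun hθ hε)]
  exact tsum_congr fun c => pairing_const_mul ν (ε c) (cellFun θ σ z c)

lemma sum_abs_cellCoord_le (hθ : 1 < θ) {ν : M →₀ ℝ} {B : ℝ}
    (hB : ∀ f : M → ℝ, f z = 0 → LipschitzWith 1 f → |pairing ν f| ≤ B) (F : Finset (ℤ × ℕ)) :
    ∑ c ∈ F, |cellCoord θ σ z ν c| ≤ θ * B := by
  classical
  have hθ0 : 0 < θ := zero_lt_one.trans hθ
  let ε : ℤ × ℕ → ℝ := fun c => if c ∈ F then SignType.sign (cellCoord θ σ z ν c) else 0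
  have hε : ∀ c, |ε c| ≤ 1 := fun c => by
    by_cases hc : c ∈ F <;> simp [ε, hc, abs_sign_le_one]
  have hpair : pairing ν (signedFun θ σ z ε) = ∑ c ∈ F, |cellCoord θ σ z ν c| := by
    rw [pairing_signedFun hθ hε, tsum_eq_sum (s := F) fun c hc => by simp [ε, hc]]
    exact Finset.sum_congr rfl fun c hc => by simp [ε, hc]
  have := hB (fun x => θ⁻¹ * signedFun θ σ z ε x) (by rw [signedFun_base, mul_zero])
    (lipschitzWith_inv_mul_signedFun hθ hε)
  rw [pairing_const_mul, hpair, abs_mul, abs_of_pos (inv_pos.mpr hθ0),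
    abs_of_nonneg (Finset.sum_nonneg fun _ _ => abs_nonneg _), inv_mul_le_iff₀ hθ0] at this
  exact this

end SignedFun

section BallApprox

variable {M : Type*} [MetricSpace M] {f : M → ℝ} {A : Finset M} {hA : A.Nonempty} {r : ℝ}

/- The McShane extension of `f|A` for the kernel `max r (dist x a)`, shifted by `r / 2`. In an
ultrametric space this kernel, hence the extension, is constant in `x` on closed `r`-balls. -/
noncomputable def ballApprox (f : M → ℝ) (A : Finset M) (hA : A.Nonempty) (r : ℝ) (x : M) : ℝ :=
  A.sup' hA (fun a => f a - max r (dist x a)) + r / 2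

lemma abs_ballApprox_sub_ballApprox_le {r' : ℝ} (hrr : r ≤ r') (x : M) :
    |ballApprox f A hA r' x - ballApprox f A hA r x| ≤ (r' - r) / 2 := by
  have hmono : A.sup' hA (fun a => f a - max r' (dist x a))
      ≤ A.sup' hA (fun a => f a - max r (dist x a)) :=
    Finset.sup'_mono_fun fun a _ => by linarith [max_le_max_right (dist x a) hrr]
  have hshift : A.sup' hA (fun a => f a - max r (dist x a))
      ≤ A.sup' hA (fun a => f a - max r' (dist x a)) + (r' - r) :=
    Finset.sup'_le _ _ fun a ha => by
      have := Finset.le_sup' (fun a => f a - max r' (dist x a)) ha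
      have : max r' (dist x a) ≤ max r (dist x a) + (r' - r) :=
        max_le (by linarith [le_max_left r (dist x a)]) (by linarith [le_max_right r (dist x a)])
      linarith
  rw [ballApprox, ballApprox, abs_le]
  constructor <;> linarith

lemma abs_ballApprox_sub_le (hf : LipschitzWith 1 f) (hr : 0 ≤ r) {x : M} (hx : x ∈ A) :
    |ballApprox f A hA r x - f x| ≤ r / 2 := by
  have hupper : A.sup' hA (fun a => f a - max r (dist x a)) ≤ f x :=
    Finset.sup'_le _ _ fun a _ => by
      have := (le_abs_self _).trans (hf.dist_le_mul a x)
      rw [NNReal.coe_one, one_mul, dist_comm] at this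
      linarith [le_max_right r (dist x a), Real.dist_eq (f a) (f x)]
  have hlower : f x - r ≤ A.sup' hA (fun a => f a - max r (dist x a)) :=
    (Finset.le_sup' (fun a => f a - max r (dist x a)) hx).trans_eq' <| by
      rw [dist_self, max_eq_left hr]
  rw [ballApprox, abs_le]
  constructor <;> linarith

lemma ballApprox_eq_of_dist_le [IsUltrametricDist M] {x y : M} (h : dist x y ≤ r) :
    ballApprox f A hA r x = ballApprox f A hA r y := by
  have key : ∀ {x y : M}, dist x y ≤ r → ∀ a, max r (dist x a) ≤ max r (dist y a) :=
    fun h a => max_le (le_max_left _ _)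
      ((IsUltrametricDist.dist_triangle_max _ _ a).trans (max_le_max_right _ h))
  rw [ballApprox, ballApprox]
  congr 1
  exact Finset.sup'_congr hA rfl fun a _ => by
    rw [le_antisymm (key h a) (key (dist_comm x y ▸ h) a)]

end BallApprox

section UpperBound

variable {M : Type*} [MetricSpace M] [IsUltrametricDist M] {θ : ℝ} {σ : ℕ → M} {z : M}
  {ν : M →₀ ℝ} {N : ℕ}

lemma pairing_sub_le_sum_abs_cellCoord (hθ : 1 < θ) (hz : ∃ n < N, σ n = z)
    (hN : ∀ x ∈ ν.support, ∃ n < N, σ n = x)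
    {k : ℤ} {h : M → ℝ} (hh : ∀ x y, dist x y ≤ θ ^ k → h x = h y)
    (hw : ∀ x, |h x| ≤ levelWeight θ k) :
    pairing ν (fun x => h x - h z) ≤ ∑ i ∈ Finset.range N, |cellCoord θ σ z ν (k, i)| := by
  have hw0 := levelWeight_pos hθ k
  have hrep : ∀ x, (∃ n < N, σ n = x) →
      h x = ∑ i ∈ Finset.range N, h (σ i) * cellIndicator σ (θ ^ k) i x := by
    rintro x ⟨n, hn, rfl⟩
    exact (sum_mul_cellIndicator (zpow_pos (zero_lt_one.trans hθ) k).le hh hn).symm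
  have hsupp : ∀ x ∈ ν.support, h x - h z =
      ∑ i ∈ Finset.range N, h (σ i) / levelWeight θ k * cellFun θ σ z (k, i) x := by
    intro x hx
    rw [hrep x (hN x hx), hrep z hz,
      ← Finset.sum_sub_distrib]
    refine Finset.sum_congr rfl fun i _ => ?_
    rw [cellFun]
    field_simp
  rw [pairing_congr hsupp, pairing_sum]
  refine Finset.sum_le_sum fun i _ => ?_
  rw [pairing_const_mul]
  refine (le_abs_self _).trans (abs_mul_le_of_abs_le_one ?_ _)
  rw [abs_div, abs_of_pos hw0]
  exact div_le_one_of_le₀ (hw _) hw0.le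

lemma pairing_ballApprox_step_le (hθ : 1 < θ) (hz : ∃ n < N, σ n = z)
    (hN : ∀ x ∈ ν.support, ∃ n < N, σ n = x) (f : M → ℝ) {A : Finset M} (hA : A.Nonempty)
    (k : ℤ) :
    pairing ν (fun x => (ballApprox f A hA (θ ^ k) x - ballApprox f A hA (θ ^ (k + 1)) x)
      - (ballApprox f A hA (θ ^ k) z - ballApprox f A hA (θ ^ (k + 1)) z))
      ≤ ∑ i ∈ Finset.range N, |cellCoord θ σ z ν (k, i)| := by
  refine pairing_sub_le_sum_abs_cellCoord hθ hz hN (fun x y hxy => ?_) fun x => ?_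
  · have hxy' : dist x y ≤ θ ^ (k + 1) := hxy.trans (zpow_le_zpow_right₀ hθ.le (by omega))
    rw [ballApprox_eq_of_dist_le hxy, ballApprox_eq_of_dist_le hxy']
  · rw [abs_sub_comm]
    exact abs_ballApprox_sub_ballApprox_le (zpow_le_zpow_right₀ hθ.le (by omega)) x

lemma pairing_le_tsum_abs_cellCoord_add (hθ : 1 < θ) (hz : ∃ n < N, σ n = z)
    (hN : ∀ x ∈ ν.support, ∃ n < N, σ n = x) (hsum : Summable fun c => |cellCoord θ σ z ν c|)
    {f : M → ℝ} (hf0 : f z = 0) (hf : LipschitzWith 1 f) (k₀ : ℤ) :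
    pairing ν f ≤ ∑' c, |cellCoord θ σ z ν c| + θ ^ k₀ * ∑ x ∈ ν.support, |ν x| := by
  classical
  set A := insert z ν.support
  have hA : A.Nonempty := Finset.insert_nonempty z _
  obtain ⟨L, hL⟩ := exists_forall_le_zpow_add hθ k₀ A (dist · z)
  let Φ : ℕ → M → ℝ := fun j => ballApprox f A hA (θ ^ (k₀ + j))
  let H : ℕ → M → ℝ := fun j x => Φ j x - Φ (j + 1) x
  have hdecomp : ∀ x ∈ ν.support, f x =
      ((f x - Φ 0 x) - (f z - Φ 0 z)) + ∑ j ∈ Finset.range L, (H j x - H j z) := by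
    intro x hx
    have hLx : Φ L x = Φ L z := ballApprox_eq_of_dist_le (hL x (Finset.mem_insert_of_mem hx))
    rw [Finset.sum_sub_distrib, Finset.sum_range_sub' (Φ · x), Finset.sum_range_sub' (Φ · z), hLx,
      hf0]
    ring
  have hbase : pairing ν (fun x => (f x - Φ 0 x) - (f z - Φ 0 z))
      ≤ θ ^ k₀ * ∑ x ∈ ν.support, |ν x| := by
    have hclose : ∀ x ∈ A, |f x - Φ 0 x| ≤ θ ^ k₀ / 2 := fun x hx => by
      rw [abs_sub_comm]
      simpa [Φ] using abs_ballApprox_sub_le hf (zpow_pos (zero_lt_one.trans hθ) k₀).le hx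
    rw [pairing_apply, Finset.mul_sum]
    refine Finset.sum_le_sum fun x hx => (le_abs_self _).trans ?_
    rw [abs_mul, mul_comm]
    refine mul_le_mul_of_nonneg_right ((abs_sub _ _).trans ?_) (abs_nonneg _)
    linarith [hclose x (Finset.mem_insert_of_mem hx), hclose z (Finset.mem_insert_self z _)]
  have hlevel : ∀ j : ℕ, pairing ν (fun x => H j x - H j z)
      ≤ ∑ i ∈ Finset.range N, |cellCoord θ σ z ν (k₀ + j, i)| := fun j => by
    simpa only [H, Φ, Nat.cast_succ, ← add_assoc] using
      pairing_ballApprox_step_le hθ hz hN f hA (k₀ + j)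
  calc pairing ν f
      = pairing ν (fun x => (f x - Φ 0 x) - (f z - Φ 0 z))
          + ∑ j ∈ Finset.range L, pairing ν (fun x => H j x - H j z) := by
        rw [pairing_congr hdecomp, pairing_add, pairing_sum]
    _ ≤ θ ^ k₀ * ∑ x ∈ ν.support, |ν x|
          + ∑ j ∈ Finset.range L, ∑ i ∈ Finset.range N, |cellCoord θ σ z ν (k₀ + j, i)| :=
        add_le_add hbase (Finset.sum_le_sum fun j _ => hlevel j)
    _ ≤ ∑' c, |cellCoord θ σ z ν c| + θ ^ k₀ * ∑ x ∈ ν.support, |ν x| := by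
        linarith [sum_range_sum_range_le_tsum (fun c => abs_nonneg (cellCoord θ σ z ν c))
          hsum k₀ L N]

lemma freeNorm_le_tsum_abs_cellCoord (hθ : 1 < θ) (hz : z ∈ Set.range σ)
    (hν : ∀ x ∈ ν.support, x ∈ Set.range σ) :
    freeNorm z ν ≤ ∑' c, |cellCoord θ σ z ν c| := by
  classical
  obtain ⟨N, hN⟩ := exists_lt_eq_of_subset_range (A := insert z ν.support) fun x hx =>
    (Finset.mem_insert.mp hx).elim (· ▸ hz) (hν x)
  have hsum : Summable fun c => |cellCoord θ σ z ν c| :=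
    summable_of_sum_le (fun _ => abs_nonneg _)
      (sum_abs_cellCoord_le hθ fun f hf0 hf => abs_pairing_le_freeNorm ν hf0 hf)
  refine freeNorm_le fun f hf0 hf => ?_
  have hlim : Tendsto (fun n : ℕ => ∑' c, |cellCoord θ σ z ν c|
      + θ ^ (-(n : ℤ)) * ∑ x ∈ ν.support, |ν x|) atTop (𝓝 (∑' c, |cellCoord θ σ z ν c|)) := by
    simp only [zpow_neg, zpow_natCast]
    simpa using tendsto_const_nhds.add
      (((tendsto_pow_atTop_atTop_of_one_lt hθ).inv_tendsto_atTop).mul_const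
        (∑ x ∈ ν.support, |ν x|))
  exact ge_of_tendsto' hlim fun n => pairing_le_tsum_abs_cellCoord_add hθ
    (hN z (Finset.mem_insert_self z _)) (fun x hx => hN x (Finset.mem_insert_of_mem hx))
    hsum hf0 hf _

end UpperBound

lemma exists_range_supset_supports {M : Type*} (z : M) (μ : ℕ → M →₀ ℝ) : ∃ σ : ℕ → M,
    z ∈ Set.range σ ∧ ∀ k l, ∀ x ∈ (μ k - μ l).support, x ∈ Set.range σ := by
  classical
  obtain ⟨σ, hσ⟩ := ((Set.countable_iUnion fun n => (μ n).support.countable_toSet).insert z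
    ).exists_eq_range (Set.insert_nonempty _ _)
  refine ⟨σ, hσ ▸ Set.mem_insert z _, fun k l x hx => hσ ▸ Set.mem_insert_of_mem z ?_⟩
  exact (Finset.mem_union.mp (Finsupp.support_sub hx)).elim
    (fun h => Set.mem_iUnion.mpr ⟨k, h⟩) fun h => Set.mem_iUnion.mpr ⟨l, h⟩

section Schur

variable {M : Type*} [MetricSpace M] {z : M} {μ : ℕ → M →₀ ℝ} {C : ℝ}

lemma seqCa_eq_pairLimsup : seqCa z μ = pairLimsup fun k l => freeNorm z (μ k - μ l) := rfl

lemma seqDe_eq_sSup : seqDe z μ = sSup {t | ∃ f : M → ℝ, f z = 0 ∧ LipschitzWith 1 f ∧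
    t = pairLimsup fun k l => |pairing (μ k - μ l) f|} := rfl

lemma abs_pairing_sub_le (hC : ∀ n, freeNorm z (μ n) ≤ C) {f : M → ℝ} (hf0 : f z = 0)
    (hf : LipschitzWith 1 f) (k l : ℕ) : |pairing (μ k - μ l) f| ≤ 2 * C := by
  rw [pairing_sub, two_mul]
  exact (abs_sub _ _).trans (add_le_add ((abs_pairing_le_freeNorm _ hf0 hf).trans (hC k))
    ((abs_pairing_le_freeNorm _ hf0 hf).trans (hC l)))

lemma freeNorm_sub_le (hC : ∀ n, freeNorm z (μ n) ≤ C) (k l : ℕ) :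
    freeNorm z (μ k - μ l) ≤ 2 * C :=
  freeNorm_le fun _ hf0 hf => (le_abs_self _).trans (abs_pairing_sub_le hC hf0 hf k l)

lemma le_seqDe (hC : ∀ n, freeNorm z (μ n) ≤ C) {f : M → ℝ} (hf0 : f z = 0)
    (hf : LipschitzWith 1 f) : pairLimsup (fun k l => |pairing (μ k - μ l) f|) ≤ seqDe z μ := by
  rw [seqDe_eq_sSup]
  refine le_csSup ⟨2 * C, ?_⟩ ⟨f, hf0, hf, rfl⟩
  rintro _ ⟨g, hg0, hg, rfl⟩
  exact pairLimsup_le (fun _ _ => abs_nonneg _) (abs_pairing_sub_le hC hg0 hg)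

lemma seqCa_le_mul_seqDe_add [IsUltrametricDist M] (hC : ∀ n, freeNorm z (μ n) ≤ C) {θ : ℝ}
    (hθ : 1 < θ) {η : ℝ} (hη : 0 < η) : seqCa z μ ≤ θ * seqDe z μ + η := by
  have hθ0 : 0 < θ := zero_lt_one.trans hθ
  rw [seqCa_eq_pairLimsup]
  choose k hk l hl hkl using exists_lt_of_lt_pairLimsup (fun _ _ => freeNorm_nonneg _)
    (freeNorm_sub_le hC) (sub_lt_self _ (half_pos hη))
  obtain ⟨σ, hz, hsupp⟩ := exists_range_supset_supports z μ
  obtain ⟨ε, hε, hfreq⟩ := exists_sign_frequently_tsum_abs_le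
    (a := fun j => cellCoord θ σ z (μ (k j) - μ (l j)))
    (fun j => sum_abs_cellCoord_le hθ fun f hf0 hf => abs_pairing_sub_le hC hf0 hf (k j) (l j))
    (half_pos hη)
  let f : M → ℝ := fun x => θ⁻¹ * signedFun θ σ z ε x
  have hf0 : f z = 0 := by simp only [f, signedFun_base, mul_zero]
  have hf : LipschitzWith 1 f := lipschitzWith_inv_mul_signedFun hθ hε
  have hlow : θ⁻¹ * ((pairLimsup fun k l => freeNorm z (μ k - μ l)) - η)
      ≤ pairLimsup fun k l => |pairing (μ k - μ l) f| := by
    refine le_pairLimsup (abs_pairing_sub_le hC hf0 hf) fun n => ?_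
    obtain ⟨j, hjn, hj⟩ := frequently_atTop.mp hfreq n
    refine ⟨k j, hjn.trans (hk j), l j, hjn.trans (hl j), le_abs.mpr (Or.inl ?_)⟩
    rw [pairing_const_mul, pairing_signedFun hθ hε]
    refine mul_le_mul_of_nonneg_left ?_ (inv_nonneg.mpr hθ0.le)
    linarith [hkl j, freeNorm_le_tsum_abs_cellCoord (θ := θ) hθ hz (hsupp (k j) (l j))]
  have := hlow.trans (le_seqDe hC hf0 hf)
  rw [inv_mul_le_iff₀ hθ0] at this
  linarith

end Schur

/-- The Lipschitz-free space over an ultrametric space is `1`-Schur. -/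
theorem freeSpace_one_schur_of_ultrametric
    {M : Type*} [MetricSpace M] (z : M)
    (hultra : ∀ x y w : M, dist x w ≤ max (dist x y) (dist y w))
    (μ : ℕ → M →₀ ℝ) (hbdd : ∃ C : ℝ, ∀ n, freeNorm z (μ n) ≤ C) :
    seqCa z μ ≤ seqDe z μ := by
  have : IsUltrametricDist M := ⟨hultra⟩
  obtain ⟨C, hC⟩ := hbdd
  exact le_of_forall_one_lt_le_mul_add fun θ hθ η hη => seqCa_le_mul_seqDe_add hC hθ hη
end

section
/- Let X be a real Banach space and let c ≥ 1. Then X is c-Schur if and only if for every bounded sequence (x_n) in X one has limsup_n ‖x_n‖ ≤ c · sup { limsup_n |x*(x_n)| : x* ∈ X*, ‖x*‖ ≤ 1 }. -/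
open scoped BigOperators
open Filter

/-- `ca` of a real sequence: `inf_n sup {|t_k - t_l| : k, l ≥ n}`. -/
noncomputable def caSeqR (t : ℕ → ℝ) : ℝ :=
  sInf {s | ∃ n : ℕ, s = sSup {u | ∃ k, n ≤ k ∧ ∃ l, n ≤ l ∧ u = |t k - t l|}}

/-- `ca` of a sequence in a normed space: `inf_n diam {x_k : k ≥ n}`. -/
noncomputable def caSeq {X : Type*} [NormedAddCommGroup X] (x : ℕ → X) : ℝ :=
  sInf {s | ∃ n : ℕ, s = Metric.diam (x '' Set.Ici n)}

/-- `de` of a sequence: `sup {ca((x*(x_n))_n) : x* ∈ B_{X*}}`. -/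
noncomputable def deSeq {X : Type*} [NormedAddCommGroup X] [NormedSpace ℝ X]
    (x : ℕ → X) : ℝ :=
  sSup {t | ∃ φ : X →L[ℝ] ℝ, ‖φ‖ ≤ 1 ∧ t = caSeqR fun n => φ (x n)}

/-- `wca(x_n) = inf {ca((x_{n_k})_k) : (n_k) strictly increasing}`. -/
noncomputable def wcaSeq {X : Type*} [NormedAddCommGroup X] (x : ℕ → X) : ℝ :=
  sInf {t | ∃ n : ℕ → ℕ, StrictMono n ∧ t = caSeq (x ∘ n)}

/-- `wde(x_n) = inf {de((x_{n_k})_k) : (n_k) strictly increasing}`. -/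
noncomputable def wdeSeq {X : Type*} [NormedAddCommGroup X] [NormedSpace ℝ X]
    (x : ℕ → X) : ℝ :=
  sInf {t | ∃ n : ℕ → ℕ, StrictMono n ∧ t = deSeq (x ∘ n)}

/-- A real normed space is `c`-Schur if `ca(x_n) ≤ c · de(x_n)` for every bounded
sequence `(x_n)`. -/
def IsCSchur (X : Type*) [NormedAddCommGroup X] [NormedSpace ℝ X] (c : ℝ) : Prop :=
  ∀ x : ℕ → X, (∃ C : ℝ, ∀ n, ‖x n‖ ≤ C) → caSeq x ≤ c * deSeq x

/-- A real normed space has the `c`-strong Schur property if every normalized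
`δ`-separated sequence admits a subsequence `(2c/δ + ε)`-equivalent to the unit
vector basis of `ℓ¹`. -/
def HasCStrongSchur (X : Type*) [NormedAddCommGroup X] [NormedSpace ℝ X] (c : ℝ) : Prop :=
  ∀ δ : ℝ, 0 < δ → δ ≤ 2 → ∀ ε : ℝ, 0 < ε → ∀ x : ℕ → X,
    (∀ n, ‖x n‖ = 1) → (∀ n m, n ≠ m → δ ≤ ‖x n - x m‖) →
    ∃ n : ℕ → ℕ, StrictMono n ∧ ∀ (N : ℕ) (a : ℕ → ℝ),
      (2 * c / δ + ε)⁻¹ * ∑ k ∈ Finset.range N, |a k| ≤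
        ‖∑ k ∈ Finset.range N, a k • x (n k)‖

-- helper lemmas
def TSet (t : ℕ → ℝ) (n : ℕ) : Set ℝ := {u | ∃ k, n ≤ k ∧ ∃ l, n ≤ l ∧ u = |t k - t l|}

lemma caSeqR_eq (t : ℕ → ℝ) : caSeqR t = sInf {s | ∃ n : ℕ, s = sSup (TSet t n)} := rfl

lemma TSet_zero_mem (t : ℕ → ℝ) (n : ℕ) : (0:ℝ) ∈ TSet t n :=
  ⟨n, le_rfl, n, le_rfl, by simp⟩

lemma sSup_TSet_nonneg (t : ℕ → ℝ) (n : ℕ) : 0 ≤ sSup (TSet t n) :=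
  Real.sSup_nonneg (by rintro u ⟨k, _, l, _, rfl⟩; exact abs_nonneg _)

lemma caSeqR_nonneg (t : ℕ → ℝ) : 0 ≤ caSeqR t := by
  rw [caSeqR_eq]
  refine le_csInf ⟨sSup (TSet t 0), 0, rfl⟩ ?_
  rintro s ⟨n, rfl⟩
  exact sSup_TSet_nonneg t n

lemma caSeqR_le_sSup_TSet (t : ℕ → ℝ) (n : ℕ) : caSeqR t ≤ sSup (TSet t n) := by
  rw [caSeqR_eq]
  exact csInf_le ⟨0, by rintro s ⟨m, rfl⟩; exact sSup_TSet_nonneg t m⟩ ⟨n, rfl⟩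

lemma caSeqR_le (t : ℕ → ℝ) {a : ℝ} (ha : 0 ≤ a) (n : ℕ)
    (h : ∀ k, n ≤ k → ∀ l, n ≤ l → |t k - t l| ≤ a) : caSeqR t ≤ a := by
  refine le_trans (caSeqR_le_sSup_TSet t n) (Real.sSup_le ?_ ha)
  rintro u ⟨k, hk, l, hl, rfl⟩
  exact h k hk l hl

lemma le_caSeqR (t : ℕ → ℝ) {b : ℝ} (h : ∀ n, b ≤ sSup (TSet t n)) : b ≤ caSeqR t := by
  rw [caSeqR_eq]
  refine le_csInf ⟨sSup (TSet t 0), 0, rfl⟩ ?_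
  rintro s ⟨n, rfl⟩
  exact h n

lemma abs_sub_le_sSup_TSet {t : ℕ → ℝ} {C : ℝ} (hC : ∀ k, |t k| ≤ C) {n k l : ℕ}
    (hk : n ≤ k) (hl : n ≤ l) : |t k - t l| ≤ sSup (TSet t n) := by
  refine le_csSup ⟨2 * C, ?_⟩ ⟨k, hk, l, hl, rfl⟩
  rintro u ⟨k', _, l', _, rfl⟩
  calc |t k' - t l'| ≤ |t k'| + |t l'| := abs_sub _ _
    _ ≤ C + C := add_le_add (hC k') (hC l')
    _ = 2 * C := by ring

lemma caSeqR_zero : caSeqR (fun _ => (0:ℝ)) = 0 :=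
  le_antisymm (caSeqR_le _ le_rfl 0 (by intro k _ l _; simp)) (caSeqR_nonneg _)

section NS
variable {X : Type*} [NormedAddCommGroup X] [NormedSpace ℝ X]

lemma caSeq_le_diam (x : ℕ → X) (n : ℕ) : caSeq x ≤ Metric.diam (x '' Set.Ici n) :=
  csInf_le ⟨0, by rintro s ⟨m, rfl⟩; exact Metric.diam_nonneg⟩ ⟨n, rfl⟩

lemma le_caSeq (x : ℕ → X) {b : ℝ} (h : ∀ n, b ≤ Metric.diam (x '' Set.Ici n)) :
    b ≤ caSeq x := by
  refine le_csInf ⟨Metric.diam (x '' Set.Ici 0), 0, rfl⟩ ?_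
  rintro s ⟨n, rfl⟩
  exact h n

lemma caSeqR_comp_le {x : ℕ → X} {C : ℝ} (hC : ∀ n, ‖x n‖ ≤ C)
    {φ : X →L[ℝ] ℝ} (hφ : ‖φ‖ ≤ 1) : caSeqR (fun n => φ (x n)) ≤ 2 * C := by
  have hC0 : 0 ≤ C := le_trans (norm_nonneg _) (hC 0)
  refine caSeqR_le _ (by linarith) 0 ?_
  intro k _ l _
  calc |φ (x k) - φ (x l)| = ‖φ (x k - x l)‖ := by rw [map_sub]; rfl
    _ ≤ ‖φ‖ * ‖x k - x l‖ := φ.le_opNorm _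
    _ ≤ 1 * (‖x k‖ + ‖x l‖) := by
        apply mul_le_mul hφ (norm_sub_le _ _) (norm_nonneg _) zero_le_one
    _ ≤ 1 * (C + C) := by
        apply mul_le_mul_of_nonneg_left (add_le_add (hC k) (hC l)) zero_le_one
    _ = 2 * C := by ring

lemma deSet_bddAbove {x : ℕ → X} {C : ℝ} (hC : ∀ n, ‖x n‖ ≤ C) :
    BddAbove {t | ∃ φ : X →L[ℝ] ℝ, ‖φ‖ ≤ 1 ∧ t = caSeqR fun n => φ (x n)} := by
  refine ⟨2 * C, ?_⟩
  rintro t ⟨φ, hφ, rfl⟩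
  exact caSeqR_comp_le hC hφ

lemma zero_mem_deSet (x : ℕ → X) :
    (0:ℝ) ∈ {t | ∃ φ : X →L[ℝ] ℝ, ‖φ‖ ≤ 1 ∧ t = caSeqR fun n => φ (x n)} := by
  refine ⟨0, by simp, ?_⟩
  simp only [ContinuousLinearMap.zero_apply]
  exact caSeqR_zero.symm

lemma deSeq_nonneg {x : ℕ → X} {C : ℝ} (hC : ∀ n, ‖x n‖ ≤ C) : 0 ≤ deSeq x :=
  le_csSup (deSet_bddAbove hC) (zero_mem_deSet x)

lemma caSeqR_le_deSeq {x : ℕ → X} {C : ℝ} (hC : ∀ n, ‖x n‖ ≤ C)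
    {φ : X →L[ℝ] ℝ} (hφ : ‖φ‖ ≤ 1) : caSeqR (fun n => φ (x n)) ≤ deSeq x :=
  le_csSup (deSet_bddAbove hC) ⟨φ, hφ, rfl⟩

lemma deSeq_le (x : ℕ → X) {a : ℝ} (ha : 0 ≤ a)
    (h : ∀ φ : X →L[ℝ] ℝ, ‖φ‖ ≤ 1 → caSeqR (fun n => φ (x n)) ≤ a) : deSeq x ≤ a :=
  Real.sSup_le (by rintro t ⟨φ, hφ, rfl⟩; exact h φ hφ) ha

end NS

-- limsup helpers
lemma limsup_le_of_tail {u : ℕ → ℝ} {a : ℝ} (hnn : ∀ n, 0 ≤ u n) {m : ℕ}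
    (h : ∀ k, m ≤ k → u k ≤ a) : limsup u atTop ≤ a := by
  refine limsup_le_of_le (isCoboundedUnder_le_of_le atTop hnn) ?_
  exact eventually_atTop.2 ⟨m, h⟩

private lemma forward_dir
    (X : Type*) [NormedAddCommGroup X] [NormedSpace ℝ X]
    (c : ℝ) (hc : 1 ≤ c) (hS : IsCSchur X c) :
    ∀ x : ℕ → X, (∃ C : ℝ, ∀ n, ‖x n‖ ≤ C) →
        limsup (fun n => ‖x n‖) atTop ≤
          c * sSup {t | ∃ φ : X →L[ℝ] ℝ, ‖φ‖ ≤ 1 ∧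
            t = limsup (fun n => |φ (x n)|) atTop} := by
  intro x hx
  obtain ⟨C, hC⟩ := hx
  have hC0 : 0 ≤ C := le_trans (norm_nonneg _) (hC 0)
  set SS := {t | ∃ φ : X →L[ℝ] ℝ, ‖φ‖ ≤ 1 ∧ t = limsup (fun n => |φ (x n)|) atTop} with hSS
  set S := sSup SS with hSdef
  have hbddSS : BddAbove SS := by
    refine ⟨C, ?_⟩
    rintro t ⟨φ, hφ, rfl⟩
    refine limsup_le_of_tail (fun n => abs_nonneg _) (m := 0) ?_
    intro k _
    calc |φ (x k)| = ‖φ (x k)‖ := rfl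
      _ ≤ ‖φ‖ * ‖x k‖ := φ.le_opNorm _
      _ ≤ 1 * C := mul_le_mul hφ (hC k) (norm_nonneg _) zero_le_one
      _ = C := one_mul _
  have hS0 : 0 ≤ S := by
    refine le_csSup hbddSS ⟨0, by simp, ?_⟩
    simp only [ContinuousLinearMap.zero_apply, abs_zero]
    exact (limsup_const (0:ℝ)).symm
  set y : ℕ → X := fun m => if Even m then x (m / 2) else -(x (m / 2)) with hy
  have hyeven : ∀ k, y (2 * k) = x k := by
    intro k
    simp only [hy]
    rw [if_pos (even_two_mul k), Nat.mul_div_cancel_left _ (by norm_num)]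
  have hyodd : ∀ k, y (2 * k + 1) = -(x k) := by
    intro k
    have he : ¬ Even (2 * k + 1) := by simp [Nat.even_add_one, parity_simps]
    have hd : (2 * k + 1) / 2 = k := by omega
    simp only [hy, if_neg he, hd]
  have hyb : ∀ m, ‖y m‖ ≤ C := by
    intro m
    simp only [hy]
    split <;> simp [hC]
  have hybdd : ∀ n : ℕ, Bornology.IsBounded (y '' Set.Ici n) := by
    intro n
    refine (Metric.isBounded_closedBall (x := (0:X)) (r := C)).subset ?_
    rintro _ ⟨m, _, rfl⟩
    simpa [Metric.mem_closedBall, dist_eq_norm] using hyb m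
  -- ca(y) ≥ 2 limsup ‖x n‖
  have h1 : 2 * limsup (fun n => ‖x n‖) atTop ≤ caSeq y := by
    refine le_caSeq y ?_
    intro n
    have key : limsup (fun n => ‖x n‖) atTop ≤ Metric.diam (y '' Set.Ici n) / 2 := by
      refine limsup_le_of_tail (fun k => norm_nonneg _) (m := n) ?_
      intro k hk
      have hmem1 : y (2 * k) ∈ y '' Set.Ici n := ⟨2 * k, by simp [Set.mem_Ici]; omega, rfl⟩
      have hmem2 : y (2 * k + 1) ∈ y '' Set.Ici n := ⟨2 * k + 1, by simp [Set.mem_Ici]; omega, rfl⟩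
      have hd : dist (y (2 * k)) (y (2 * k + 1)) ≤ Metric.diam (y '' Set.Ici n) :=
        Metric.dist_le_diam_of_mem (hybdd n) hmem1 hmem2
      rw [hyeven, hyodd, dist_eq_norm, sub_neg_eq_add] at hd
      have : ‖x k + x k‖ = 2 * ‖x k‖ := by
        rw [← two_smul ℝ (x k), norm_smul]
        simp
      linarith
    linarith
  -- de(y) ≤ 2 S
  have h2 : deSeq y ≤ 2 * S := by
    refine deSeq_le y (by linarith) ?_
    intro φ hφ
    set r := limsup (fun n => |φ (x n)|) atTop with hr
    have hrS : r ≤ S := le_csSup hbddSS ⟨φ, hφ, rfl⟩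
    have hr0 : 0 ≤ r := by
      refine le_limsup_of_frequently_le (Frequently.of_forall fun n => abs_nonneg _) ?_
      exact isBoundedUnder_of ⟨C, fun (k : ℕ) => by
        calc |φ (x k)| = ‖φ (x k)‖ := rfl
          _ ≤ ‖φ‖ * ‖x k‖ := φ.le_opNorm _
          _ ≤ 1 * C := mul_le_mul hφ (hC k) (norm_nonneg _) zero_le_one
          _ = C := one_mul _⟩
    have key : ∀ ε : ℝ, 0 < ε → caSeqR (fun n => φ (y n)) ≤ 2 * r + ε := by
      intro ε hε
      have hlt : limsup (fun n => |φ (x n)|) atTop < r + ε / 2 := by linarith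
      have hbd : IsBoundedUnder (· ≤ ·) atTop (fun n => |φ (x n)|) :=
        isBoundedUnder_of ⟨C, fun (k : ℕ) => by
          calc |φ (x k)| = ‖φ (x k)‖ := rfl
            _ ≤ ‖φ‖ * ‖x k‖ := φ.le_opNorm _
            _ ≤ 1 * C := mul_le_mul hφ (hC k) (norm_nonneg _) zero_le_one
            _ = C := one_mul _⟩
      have hev := eventually_lt_of_limsup_lt hlt hbd
      obtain ⟨m, hm⟩ := eventually_atTop.1 hev
      have habs : ∀ j, 2 * m ≤ j → |φ (y j)| ≤ r + ε / 2 := by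
        intro j hj
        have hj2 : m ≤ j / 2 := by omega
        have : |φ (y j)| = |φ (x (j / 2))| := by
          simp only [hy]
          split <;> simp [abs_neg]
        rw [this]
        exact le_of_lt (hm _ hj2)
      refine caSeqR_le _ (by linarith) (2 * m) ?_
      intro k hk l hl
      calc |φ (y k) - φ (y l)| ≤ |φ (y k)| + |φ (y l)| := abs_sub _ _
        _ ≤ (r + ε / 2) + (r + ε / 2) := add_le_add (habs k hk) (habs l hl)
        _ = 2 * r + ε := by ring
    have : caSeqR (fun n => φ (y n)) ≤ 2 * r := by
      by_contra hcon
      push_neg at hcon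
      have := key ((caSeqR (fun n => φ (y n)) - 2 * r) / 2) (by linarith)
      linarith
    linarith [mul_le_mul_of_nonneg_left hrS (by norm_num : (0:ℝ) ≤ 2)]
  have hmain := hS y ⟨C, hyb⟩
  have hc0 : 0 ≤ c := le_trans zero_le_one hc
  nlinarith [mul_le_mul_of_nonneg_left h2 hc0]

private lemma backward_dir
    (X : Type*) [NormedAddCommGroup X] [NormedSpace ℝ X]
    (c : ℝ) (hc : 1 ≤ c)
    (h : ∀ x : ℕ → X, (∃ C : ℝ, ∀ n, ‖x n‖ ≤ C) →
        limsup (fun n => ‖x n‖) atTop ≤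
          c * sSup {t | ∃ φ : X →L[ℝ] ℝ, ‖φ‖ ≤ 1 ∧
            t = limsup (fun n => |φ (x n)|) atTop}) :
    IsCSchur X c := by
  intro x hx
  obtain ⟨C, hC⟩ := hx
  have hC0 : 0 ≤ C := le_trans (norm_nonneg _) (hC 0)
  have hc0 : 0 ≤ c := le_trans zero_le_one hc
  have hde0 : 0 ≤ deSeq x := deSeq_nonneg hC
  set A := caSeq x with hA
  rcases le_or_gt A 0 with hA0 | hA0
  · exact le_trans hA0 (mul_nonneg hc0 hde0)
  -- bounded tails
  have hxbdd : ∀ n : ℕ, Bornology.IsBounded (x '' Set.Ici n) := by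
    intro n
    refine (Metric.isBounded_closedBall (x := (0:X)) (r := C)).subset ?_
    rintro _ ⟨m, _, rfl⟩
    simpa [Metric.mem_closedBall, dist_eq_norm] using hC m
  have hdiam : ∀ n, A ≤ Metric.diam (x '' Set.Ici n) := fun n => caSeq_le_diam x n
  -- choose separated pairs
  have hpairs : ∀ j : ℕ, ∃ k l : ℕ, j ≤ k ∧ j ≤ l ∧
      A - 1 / (j + 1) < ‖x k - x l‖ := by
    intro j
    by_contra hcon
    push_neg at hcon
    rcases le_or_gt 0 (A - 1 / (j + 1)) with hnn | hneg
    · have : Metric.diam (x '' Set.Ici j) ≤ A - 1 / (j + 1) := by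
        refine Metric.diam_le_of_forall_dist_le hnn ?_
        rintro _ ⟨k, hk, rfl⟩ _ ⟨l, hl, rfl⟩
        rw [dist_eq_norm]
        exact hcon k l hk hl
      have hj : (0:ℝ) < 1 / (j + 1) := by positivity
      linarith [hdiam j]
    · have := hcon j j le_rfl le_rfl
      simp only [sub_self, norm_zero] at this
      linarith
  choose k l hk hl hsep using hpairs
  set y : ℕ → X := fun j => x (k j) - x (l j) with hy
  have hyb : ∀ j, ‖y j‖ ≤ 2 * C := by
    intro j
    calc ‖x (k j) - x (l j)‖ ≤ ‖x (k j)‖ + ‖x (l j)‖ := norm_sub_le _ _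
      _ ≤ C + C := add_le_add (hC _) (hC _)
      _ = 2 * C := by ring
  have hmain := h y ⟨2 * C, hyb⟩
  set SY := {t | ∃ φ : X →L[ℝ] ℝ, ‖φ‖ ≤ 1 ∧ t = limsup (fun n => |φ (y n)|) atTop} with hSY
  -- A ≤ limsup ‖y j‖
  have hAle : A ≤ limsup (fun j => ‖y j‖) atTop := by
    have hbd : IsBoundedUnder (· ≤ ·) atTop (fun j => ‖y j‖) :=
      isBoundedUnder_of ⟨2 * C, fun j => hyb j⟩
    have step : ∀ ε : ℝ, 0 < ε → A - ε ≤ limsup (fun j => ‖y j‖) atTop := by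
      intro ε hε
      obtain ⟨m, hm⟩ : ∃ m : ℕ, 1 / ((m:ℝ) + 1) < ε := by
        obtain ⟨m, hm⟩ := exists_nat_gt (1 / ε)
        refine ⟨m, ?_⟩
        rw [div_lt_iff₀ (by positivity)]
        have h1 : 1 < (m:ℝ) * ε := (div_lt_iff₀ hε).mp hm
        nlinarith [hε.le]
      refine le_limsup_of_frequently_le (Eventually.frequently ?_) hbd
      refine eventually_atTop.2 ⟨m, fun j hj => ?_⟩
      have h2 : 1 / ((j:ℝ) + 1) ≤ 1 / ((m:ℝ) + 1) := by
        apply one_div_le_one_div_of_le (by positivity)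
        have : (m:ℝ) ≤ (j:ℝ) := by exact_mod_cast hj
        linarith
      have h3 := hsep j
      show A - ε ≤ ‖y j‖
      simp only [hy]
      linarith
    by_contra hcon
    push_neg at hcon
    have := step ((A - limsup (fun j => ‖y j‖) atTop) / 2) (by linarith)
    linarith
  -- sSup SY ≤ deSeq x
  have hSYle : sSup SY ≤ deSeq x := by
    refine Real.sSup_le ?_ hde0
    rintro t ⟨φ, hφ, rfl⟩
    have hφb : ∀ m, |φ (x m)| ≤ C := fun m => by
      calc |φ (x m)| = ‖φ (x m)‖ := rfl
        _ ≤ ‖φ‖ * ‖x m‖ := φ.le_opNorm _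
        _ ≤ 1 * C := mul_le_mul hφ (hC m) (norm_nonneg _) zero_le_one
        _ = C := one_mul _
    have key : ∀ n : ℕ, limsup (fun j => |φ (y j)|) atTop ≤ sSup (TSet (fun m => φ (x m)) n) := by
      intro n
      refine limsup_le_of_tail (fun j => abs_nonneg _) (m := n) ?_
      intro j hj
      have : |φ (y j)| = |φ (x (k j)) - φ (x (l j))| := by
        simp only [hy, map_sub]
      rw [this]
      exact abs_sub_le_sSup_TSet hφb (le_trans hj (hk j)) (le_trans hj (hl j))
    have : limsup (fun j => |φ (y j)|) atTop ≤ caSeqR (fun m => φ (x m)) :=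
      le_caSeqR _ key
    exact le_trans this (caSeqR_le_deSeq hC hφ)
  calc A ≤ limsup (fun j => ‖y j‖) atTop := hAle
    _ ≤ c * sSup SY := hmain
    _ ≤ c * deSeq x := mul_le_mul_of_nonneg_left hSYle hc0


/-- A real Banach space is `c`-Schur iff for every bounded sequence `(x_n)` one has
`limsup ‖x_n‖ ≤ c · sup {limsup |x*(x_n)| : x* ∈ B_{X*}}`. -/
theorem isCSchur_iff_limsup
    (X : Type*) [NormedAddCommGroup X] [NormedSpace ℝ X] [CompleteSpace X]
    (c : ℝ) (hc : 1 ≤ c) :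
    IsCSchur X c ↔
      ∀ x : ℕ → X, (∃ C : ℝ, ∀ n, ‖x n‖ ≤ C) →
        limsup (fun n => ‖x n‖) atTop ≤
          c * sSup {t | ∃ φ : X →L[ℝ] ℝ, ‖φ‖ ≤ 1 ∧
            t = limsup (fun n => |φ (x n)|) atTop} := by
  exact ⟨fun hS => forward_dir X c hc hS, fun h => backward_dir X c hc h⟩
end

section
/- Let (M,d) be a uniformly discrete metric space and let ε > 0. Then there exist a metric d' on M taking only nonnegative integer values and constants L₁, L₂ > 0 with L₁·L₂ < 1 + ε such that d'(x,y) ≤ L₁·d(x,y) and d(x,y) ≤ L₂·d'(x,y) for all x,y ∈ M. (In particular, the identity map from (M,d) to (M,d') is a bi-Lipschitz bijection F with L(F)·L(F⁻¹) < 1+ε.) -/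
/-- Every uniformly discrete metric space is, up to a `(1+ε)`-bi-Lipschitz change of
metric, a metric space with integer-valued metric. -/
theorem exists_integer_valued_metric_of_uniformlyDiscrete
    {M : Type*} [MetricSpace M]
    (hud : ∃ θ : ℝ, 0 < θ ∧ ∀ x y : M, x ≠ y → θ ≤ dist x y)
    (ε : ℝ) (hε : 0 < ε) :
    ∃ d' : M → M → ℝ,
      (∀ x y : M, d' x y = 0 ↔ x = y) ∧
      (∀ x y : M, d' x y = d' y x) ∧
      (∀ x y w : M, d' x w ≤ d' x y + d' y w) ∧
      (∀ x y : M, ∃ n : ℕ, d' x y = n) ∧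
      ∃ L₁ : ℝ, 0 < L₁ ∧ ∃ L₂ : ℝ, 0 < L₂ ∧ L₁ * L₂ < 1 + ε ∧
        (∀ x y : M, d' x y ≤ L₁ * dist x y) ∧
        (∀ x y : M, dist x y ≤ L₂ * d' x y) := by
  obtain ⟨θ, hθ, hsep⟩ := hud
  set k : ℝ := 1 / (ε * θ) + 1 with hk_def
  have hk : 0 < k := by positivity
  refine ⟨fun x y => (⌈k * dist x y⌉₊ : ℝ), ?_, ?_, ?_, ?_, k + 1/θ, by positivity,
    1/k, by positivity, ?_, ?_, ?_⟩
  · intro x y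
    rw [Nat.cast_eq_zero, Nat.ceil_eq_zero]
    constructor
    · intro h
      have h0 : 0 ≤ k * dist x y := by positivity
      have : dist x y = 0 := by
        nlinarith [le_antisymm h h0]
      exact dist_eq_zero.mp this
    · intro h; simp [h]
  · intro x y; simp only [dist_comm x y]
  · intro x y w
    rw [← Nat.cast_add]
    have h1 : k * dist x w ≤ k * dist x y + k * dist y w := by
      nlinarith [dist_triangle x y w]
    calc (⌈k * dist x w⌉₊ : ℝ) ≤ (⌈k * dist x y + k * dist y w⌉₊ : ℝ) := by
            exact_mod_cast Nat.ceil_le_ceil h1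
      _ ≤ ((⌈k * dist x y⌉₊ + ⌈k * dist y w⌉₊ : ℕ) : ℝ) := by
            exact_mod_cast Nat.ceil_add_le _ _
  · intro x y; exact ⟨_, rfl⟩
  · -- product bound
    have hkθ : 1 / ε < k * θ := by
      have : 1 / ε = (1 / (ε * θ)) * θ := by field_simp
      rw [this]; nlinarith
    have hk1 : k * (1/k) = 1 := mul_one_div_cancel hk.ne'
    have h2 : 1/θ * (1/k) < ε := by
      rw [div_mul_div_comm, one_mul, div_lt_iff₀ (by positivity)]
      rw [div_lt_iff₀ hε] at hkθ
      nlinarith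
    calc (k + 1/θ) * (1/k) = k * (1/k) + 1/θ * (1/k) := by ring
      _ < 1 + ε := by rw [hk1]; linarith
  · intro x y
    rcases eq_or_ne x y with rfl | hne
    · simp
    · have hd : θ ≤ dist x y := hsep x y hne
      have h1 : (⌈k * dist x y⌉₊ : ℝ) < k * dist x y + 1 :=
        Nat.ceil_lt_add_one (by positivity)
      have h2 : 1 ≤ dist x y / θ := (one_le_div hθ).mpr hd
      have h3 : k * dist x y + 1 ≤ (k + 1/θ) * dist x y := by
        rw [add_mul]
        have : 1/θ * dist x y = dist x y / θ := by ring
        nlinarith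
      show (⌈k * dist x y⌉₊ : ℝ) ≤ (k + 1/θ) * dist x y
      exact (h1.trans_le h3).le
  · intro x y
    have h1 : k * dist x y ≤ (⌈k * dist x y⌉₊ : ℝ) := Nat.le_ceil _
    show dist x y ≤ 1/k * (⌈k * dist x y⌉₊ : ℝ)
    rw [div_mul_eq_mul_div, one_mul, le_div_iff₀ hk]
    nlinarith
end

section
/- Let (M,d) be a pointed metric space with base point 0 whose metric takes only integer values. Then for every finitely supported function μ : M → ℝ there exists a function f : M → ℝ with f(0) = 0, f 1-Lipschitz and f taking only integer values, such that Σ_{x∈M} μ(x)·f(x) = ‖μ‖ (the free norm). In particular, the supremum defining ‖μ‖ is attained at an integer-valued 1-Lipschitz function. -/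
/-
For a `1`-Lipschitz `f` vanishing at the base point and a shift `t`, the rounding
`x ↦ ⌊f x + t⌋ - ⌊t⌋` is integer valued, vanishes at the base point, and is again
`1`-Lipschitz because all distances are integers. Averaged over `t ∈ [0, 1]` it gives back
`f`, so some shift does at least as well as `f` against `μ`. Integer-valued competitors are
bounded by `d(x, 0)` on the support of `μ`, so they produce only finitely many values, and
the largest of them is the free norm.
-/

open scoped BigOperators

open MeasureTheory intervalIntegral

theorem Int.abs_floor_sub_floor_le {R : Type*} [Ring R] [LinearOrder R] [IsStrictOrderedRing R]
    [FloorRing R] {a b : R} {n : ℤ} (h : |a - b| ≤ n) : |⌊a⌋ - ⌊b⌋| ≤ n := by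
  have floor_le : ∀ {a b : R}, |a - b| ≤ n → ⌊a⌋ ≤ ⌊b⌋ + n := fun h => by
    rw [← Int.floor_add_intCast]
    exact Int.floor_le_floor (sub_le_iff_le_add'.1 (abs_le.1 h).2)
  have hab := floor_le h
  have hba := floor_le (abs_sub_comm a b ▸ h)
  rw [abs_le]
  constructor <;> linarith

theorem Set.Finite.csSup_mem_of_forall_exists_le {α : Type*} [ConditionallyCompleteLinearOrder α]
    {A I : Set α} (hI : I.Finite) (hne : I.Nonempty) (hIA : I ⊆ A)
    (hdom : ∀ a ∈ A, ∃ i ∈ I, a ≤ i) : sSup A ∈ I := by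
  have hmem : sSup I ∈ I := hne.csSup_mem hI
  have hgreatest : IsGreatest A (sSup I) := ⟨hIA hmem, fun a ha => by
    obtain ⟨i, hi, hai⟩ := hdom a ha
    exact hai.trans (le_csSup hI.bddAbove hi)⟩
  rwa [hgreatest.csSup_eq]

theorem finite_setOf_sum_mul_intCast_of_abs_le {ι : Type*} (s : Finset ι) (c B : ι → ℝ) :
    {r : ℝ | ∃ k : ι → ℤ, (∀ i ∈ s, |(k i : ℝ)| ≤ B i) ∧ r = ∑ i ∈ s, c i * k i}.Finite := by
  classical
  refine ((Set.finite_Icc (fun i : s => -⌈B i⌉) (fun i => ⌈B i⌉)).image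
    fun k => ∑ i : s, c i * k i).subset ?_
  rintro _ ⟨k, hk, rfl⟩
  have hbound (i : s) : |k i| ≤ ⌈B i⌉ := by
    exact_mod_cast (hk i i.2).trans (Int.le_ceil _)
  exact ⟨fun i => k i, ⟨fun i => neg_le_of_abs_le (hbound i), fun i => le_of_abs_le (hbound i)⟩,
    Finset.sum_coe_sort s fun i => c i * k i⟩

theorem exists_intervalIntegral_le_mul {F : ℝ → ℝ} {a b : ℝ} (hab : a < b)
    (hF : IntervalIntegrable F volume a b) :
    ∃ t ∈ Set.Ioc a b, ∫ s in a..b, F s ≤ (b - a) * F t := by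
  obtain ⟨t, ht, hle⟩ := exists_setAverage_le (by simp [hab]) (by simp) hF.1
  refine ⟨t, ht, ?_⟩
  rw [setAverage_eq, Real.volume_real_Ioc, max_eq_left (sub_pos.2 hab).le, smul_eq_mul,
    inv_mul_le_iff₀ (sub_pos.2 hab)] at hle
  rwa [integral_of_le hab.le]

theorem intervalIntegrable_floor_add_sub_floor (x a b : ℝ) :
    IntervalIntegrable (fun t => (⌊x + t⌋ : ℝ) - ⌊t⌋) volume a b := by
  refine (Monotone.intervalIntegrable fun s t hst => ?_).sub
    (Monotone.intervalIntegrable fun s t hst => ?_)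
  · exact_mod_cast Int.floor_le_floor (by linarith)
  · exact_mod_cast Int.floor_le_floor hst

theorem intervalIntegrable_fract_add (y a b : ℝ) :
    IntervalIntegrable (fun t => Int.fract (y + t)) volume a b := by
  simp only [Int.fract]
  exact ((continuous_const.add continuous_id).intervalIntegrable a b).sub
    (Monotone.intervalIntegrable fun s t hst => by exact_mod_cast Int.floor_le_floor (by linarith))

theorem integral_fract_add (y : ℝ) :
    ∫ t in (0 : ℝ)..1, Int.fract (y + t) = ∫ t in (0 : ℝ)..1, Int.fract t := by
  rw [integral_comp_add_left, add_zero, (Int.fract_periodic ℝ).intervalIntegral_add_eq y 0,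
    zero_add]

theorem integral_floor_add_sub_floor (x : ℝ) : ∫ t in (0 : ℝ)..1, ((⌊x + t⌋ : ℝ) - ⌊t⌋) = x := by
  calc ∫ t in (0 : ℝ)..1, ((⌊x + t⌋ : ℝ) - ⌊t⌋)
      = ∫ t in (0 : ℝ)..1, (x - (Int.fract (x + t) - Int.fract (0 + t))) :=
        integral_congr fun t _ => by simp only [Int.fract, zero_add]; ring
    _ = x := by
        rw [integral_sub intervalIntegrable_const
          ((intervalIntegrable_fract_add x 0 1).sub (intervalIntegrable_fract_add 0 0 1)),
          integral_sub (intervalIntegrable_fract_add x 0 1) (intervalIntegrable_fract_add 0 0 1),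
          integral_fract_add, integral_fract_add]
        simp

theorem integral_sum_mul_floor_add_sub_floor {ι : Type*} (s : Finset ι) (c f : ι → ℝ) :
    ∫ t in (0 : ℝ)..1, ∑ i ∈ s, c i * ((⌊f i + t⌋ : ℝ) - ⌊t⌋) = ∑ i ∈ s, c i * f i := by
  rw [integral_finsetSum fun i _ =>
    (intervalIntegrable_floor_add_sub_floor (f i) 0 1).const_mul _]
  simp only [intervalIntegral.integral_const_mul, integral_floor_add_sub_floor]

section IntegerDistances

variable {M : Type*} [PseudoMetricSpace M]

theorem LipschitzWith.abs_le_dist {f : M → ℝ} (hf : LipschitzWith 1 f) {z : M} (hz : f z = 0)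
    (x : M) : |f x| ≤ dist x z := by
  simpa [Real.dist_eq, hz] using hf.dist_le_mul x z

theorem LipschitzWith.floor_add_sub_floor (hint : ∀ x y : M, ∃ n : ℕ, dist x y = n)
    {f : M → ℝ} (hf : LipschitzWith 1 f) (t : ℝ) :
    LipschitzWith 1 fun x => ((⌊f x + t⌋ - ⌊t⌋ : ℤ) : ℝ) := by
  refine LipschitzWith.of_dist_le_mul fun x y => ?_
  obtain ⟨n, hn⟩ := hint x y
  have hdiff : |(f x + t) - (f y + t)| ≤ ((n : ℤ) : ℝ) := by
    simpa [Real.dist_eq, hn] using hf.dist_le_mul x y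
  rw [Real.dist_eq, hn, NNReal.coe_one, one_mul, Int.cast_sub, Int.cast_sub,
    sub_sub_sub_cancel_right]
  exact_mod_cast Int.abs_floor_sub_floor_le hdiff

theorem LipschitzWith.exists_intCast_sum_mul_le (hint : ∀ x y : M, ∃ n : ℕ, dist x y = n)
    {f : M → ℝ} (hf : LipschitzWith 1 f) {z : M} (hz : f z = 0) (s : Finset M) (c : M → ℝ) :
    ∃ g : M → ℤ, g z = 0 ∧ LipschitzWith 1 (fun x => (g x : ℝ)) ∧
      ∑ x ∈ s, c x * f x ≤ ∑ x ∈ s, c x * g x := by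
  have hintegrable :
      IntervalIntegrable (fun t => ∑ x ∈ s, c x * ((⌊f x + t⌋ : ℝ) - ⌊t⌋)) volume 0 1 := by
    simpa only [Finset.sum_fn] using IntervalIntegrable.sum s fun x _ =>
      (intervalIntegrable_floor_add_sub_floor (f x) 0 1).const_mul (c x)
  obtain ⟨t, -, ht⟩ := exists_intervalIntegral_le_mul zero_lt_one hintegrable
  rw [integral_sum_mul_floor_add_sub_floor, sub_zero, one_mul] at ht
  exact ⟨fun x => ⌊f x + t⌋ - ⌊t⌋, by simp [hz], hf.floor_add_sub_floor hint t, by simpa using ht⟩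

end IntegerDistances

/-- If the metric of `M` takes only integer values, then the free norm of any finitely
supported `μ : M → ℝ` is attained at an integer-valued `1`-Lipschitz function
vanishing at the base point. -/
theorem freeNorm_attained_at_integer_valued
    {M : Type*} [MetricSpace M] (z : M)
    (hint : ∀ x y : M, ∃ n : ℕ, dist x y = n) (μ : M →₀ ℝ) :
    ∃ f : M → ℝ, f z = 0 ∧ LipschitzWith 1 f ∧ (∀ x : M, ∃ k : ℤ, f x = k) ∧
      ∑ x ∈ μ.support, μ x * f x = freeNorm z μ := by
  set I := {r | ∃ g : M → ℤ, g z = 0 ∧ LipschitzWith 1 (fun x => (g x : ℝ)) ∧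
    r = ∑ x ∈ μ.support, μ x * g x}
  have hfinite : I.Finite :=
    (finite_setOf_sum_mul_intCast_of_abs_le μ.support μ (dist · z)).subset <| by
    rintro _ ⟨g, hgz, hg, rfl⟩
    exact ⟨g, fun x _ => hg.abs_le_dist (by simp [hgz]) x, rfl⟩
  have hzero : (0 : ℝ) ∈ I := ⟨0, rfl, by simpa using LipschitzWith.const' (0 : ℝ), by simp⟩
  obtain ⟨g, hgz, hg, hsum⟩ : freeNorm z μ ∈ I := by
    refine hfinite.csSup_mem_of_forall_exists_le ⟨0, hzero⟩ ?_ ?_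
    · rintro _ ⟨g, hgz, hg, rfl⟩
      exact ⟨_, by simp [hgz], hg, rfl⟩
    · rintro _ ⟨f, hfz, hf, rfl⟩
      obtain ⟨g, hgz, hg, hle⟩ := hf.exists_intCast_sum_mul_le hint hfz μ.support μ
      exact ⟨_, ⟨g, hgz, hg, rfl⟩, hle⟩
  exact ⟨fun x => g x, by simp [hgz], hg, fun x => ⟨g x, rfl⟩, hsum.symm⟩
end

section
/- Let (M,d) be a pointed metric space with base point 0 whose metric takes only integer values. Let C := { f : M → ℝ : f(0) = 0 and |f(x) − f(y)| ≤ d(x,y) for all x,y ∈ M }, a convex subset of the real vector space of all functions M → ℝ. Then every extreme point f of C takes only integer values, i.e., f(x) ∈ ℤ for every x ∈ M. -/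
lemma round_min (t : ℝ) (m : ℤ) : |t - round t| ≤ |t - (m : ℝ)| := by
  rcases eq_or_ne m (round t) with h | h
  · rw [h]
  · have h1 : (1 : ℝ) ≤ |(m : ℝ) - round t| := by
      rw [← Int.cast_sub, ← Int.cast_abs]
      exact_mod_cast Int.one_le_abs (sub_ne_zero.mpr h)
    have h2 : |t - round t| ≤ 1/2 := abs_sub_round t
    have h3 : |(m:ℝ) - round t| ≤ |t - (m:ℝ)| + |t - round t| := by
      calc |(m:ℝ) - round t| = |((m:ℝ) - t) + (t - round t)| := by ring_nf
        _ ≤ |(m:ℝ) - t| + |t - round t| := abs_add_le _ _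
        _ = |t - (m:ℝ)| + |t - round t| := by rw [abs_sub_comm]
    linarith

lemma phi_diff (s t : ℝ) (k : ℤ) (h : |s - t| ≤ k) :
    |t - round t| - |s - round s| ≤ k - |s - t| := by
  by_cases hst : s ≤ t
  · have h1 : |s - t| = t - s := by rw [abs_sub_comm]; exact abs_of_nonneg (by linarith)
    have hm := round_min t (round s + k)
    have habs : |t - ((round s : ℝ) + k)| ≤ |t - s - (k:ℝ)| + |s - round s| := by
      calc |t - ((round s:ℝ) + (k:ℝ))| = |(t - s - (k:ℝ)) + (s - round s)| := by ring_nf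
        _ ≤ _ := abs_add_le _ _
    have h2 : |t - s - (k:ℝ)| = (k:ℝ) - (t - s) := by
      rw [abs_of_nonpos (by linarith [h1 ▸ h])]; ring
    push_cast at hm habs ⊢
    linarith [h1 ▸ h]
  · push_neg at hst
    have h1 : |s - t| = s - t := abs_of_nonneg (by linarith)
    have hm := round_min t (round s - k)
    have habs : |t - ((round s : ℝ) - k)| ≤ |t - s + (k:ℝ)| + |s - round s| := by
      calc |t - ((round s:ℝ) - (k:ℝ))| = |(t - s + (k:ℝ)) + (s - round s)| := by ring_nf
        _ ≤ _ := abs_add_le _ _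
    have h2 : |t - s + (k:ℝ)| = (k:ℝ) - (s - t) := by
      rw [abs_of_nonneg (by linarith [h1 ▸ h])]; ring
    push_cast at hm habs ⊢
    linarith [h1 ▸ h]

/-- If the metric of `M` takes only integer values, then every extreme point of the
unit ball `C = {f : M → ℝ | f z = 0 ∧ ∀ x y, |f x - f y| ≤ dist x y}` of `Lip₀(M)`
takes only integer values. -/
theorem extreme_points_of_lip_ball_integer_valued
    {M : Type*} [MetricSpace M] (z : M)
    (hint : ∀ x y : M, ∃ n : ℕ, dist x y = n)
    (C : Set (M → ℝ))
    (hC : C = {f : M → ℝ | f z = 0 ∧ ∀ x y : M, |f x - f y| ≤ dist x y})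
    (f : M → ℝ) (hf : f ∈ C)
    (hext : ∀ g ∈ C, ∀ h ∈ C, f = (1 / 2 : ℝ) • (g + h) → g = f ∧ h = f) :
    ∀ x : M, ∃ k : ℤ, f x = k := by
  subst hC
  obtain ⟨hfz, hflip⟩ := hf
  set φ : ℝ → ℝ := fun t => |t - round t| with hφ
  have hlip : ∀ x y : M, |(f x + φ (f x)) - (f y + φ (f y))| ≤ dist x y ∧
      |(f x - φ (f x)) - (f y - φ (f y))| ≤ dist x y := by
    intro x y
    obtain ⟨n, hn⟩ := hint x y
    have hfd := hflip x y
    rw [hn] at hfd ⊢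
    have h1 : φ (f y) - φ (f x) ≤ (n:ℤ) - |f x - f y| := by
      have := phi_diff (f x) (f y) (n:ℤ) (by exact_mod_cast hfd)
      simpa using this
    have h2 : φ (f x) - φ (f y) ≤ (n:ℤ) - |f y - f x| := by
      have := phi_diff (f y) (f x) (n:ℤ) (by rwa [abs_sub_comm])
      simpa using this
    rw [abs_sub_comm (f y)] at h2
    constructor <;>
    · rw [abs_le]
      constructor <;> [skip; skip] <;>
        cases' abs_le.mp (le_refl |f x - f y|) with _ _ <;>
        cases' abs_cases (f x - f y) with hc hc <;> push_cast at h1 h2 ⊢ <;> linarith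
  have hφz : φ 0 = 0 := by simp [hφ]
  have hg : (fun y => f y + φ (f y)) ∈ {f : M → ℝ | f z = 0 ∧ ∀ x y : M, |f x - f y| ≤ dist x y} := by
    refine ⟨by simp [hfz, hφz], fun x y => (hlip x y).1⟩
  have hh : (fun y => f y - φ (f y)) ∈ {f : M → ℝ | f z = 0 ∧ ∀ x y : M, |f x - f y| ≤ dist x y} := by
    refine ⟨by simp [hfz, hφz], fun x y => (hlip x y).2⟩
  have heq : f = (1 / 2 : ℝ) • ((fun y => f y + φ (f y)) + (fun y => f y - φ (f y))) := by
    funext y; simp [Pi.add_apply]; ring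
  obtain ⟨hg', _⟩ := hext _ hg _ hh heq
  intro x
  have : f x + φ (f x) = f x := congrFun hg' x
  have hzero : φ (f x) = 0 := by linarith
  have : f x = round (f x) := by
    have := abs_eq_zero.mp hzero
    linarith [sub_eq_zero.mp this]
  exact ⟨round (f x), this⟩
end

section
/- Let (M,d) be a pointed metric space with base point 0 and let 0 < a ≤ b be such that a ≤ d(x,y) ≤ b for all x ≠ y in M. Then for every finitely supported function α : M → ℝ with α(0) = 0 one has (a/2)·Σ_{x∈M} |α(x)| ≤ ‖α‖ ≤ b·Σ_{x∈M} |α(x)|, where ‖α‖ is the free norm. (Hence the Lipschitz-free space F(M) is isomorphic to ℓ¹(M∖{0}).) -/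
open scoped BigOperators

/-- If `a ≤ d(x,y) ≤ b` for all distinct `x, y ∈ M`, then the free norm is equivalent to
the `ℓ¹`-norm: `(a/2)·∑ |α x| ≤ ‖α‖ ≤ b·∑ |α x|` for finitely supported `α` with
`α z = 0`. -/
theorem freeNorm_ell1_equivalence
    {M : Type*} [MetricSpace M] (z : M) (a b : ℝ) (ha : 0 < a) (hab : a ≤ b)
    (hd : ∀ x y : M, x ≠ y → a ≤ dist x y ∧ dist x y ≤ b)
    (α : M →₀ ℝ) (hα : α z = 0) :
    a / 2 * ∑ x ∈ α.support, |α x| ≤ freeNorm z α ∧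
      freeNorm z α ≤ b * ∑ x ∈ α.support, |α x| := by
  have hb : (0:ℝ) < b := ha.trans_le hab
  set S := {s | ∃ f : M → ℝ, f z = 0 ∧ LipschitzWith 1 f ∧
      s = ∑ x ∈ α.support, α x * f x} with hS
  have key : ∀ s ∈ S, s ≤ b * ∑ x ∈ α.support, |α x| := by
    rintro s ⟨f, hfz, hfl, rfl⟩
    rw [Finset.mul_sum]
    apply Finset.sum_le_sum
    intro x _
    have h1 : dist (f x) (f z) ≤ 1 * dist x z := hfl.dist_le_mul x z
    have h2 : dist x z ≤ b := by
      rcases eq_or_ne x z with rfl | h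
      · simpa using hb.le
      · exact (hd x z h).2
    have hfx : |f x| ≤ b := by
      have : |f x| = dist (f x) (f z) := by simp [hfz, Real.dist_eq]
      linarith [this]
    calc α x * f x ≤ |α x * f x| := le_abs_self _
      _ = |α x| * |f x| := abs_mul _ _
      _ ≤ |α x| * b := by
          exact mul_le_mul_of_nonneg_left hfx (abs_nonneg _)
      _ = b * |α x| := mul_comm _ _
  have hbdd : BddAbove S := ⟨_, key⟩
  constructor
  · -- lower bound
    have hg : (a / 2 * ∑ x ∈ α.support, |α x|) ∈ S := by
      refine ⟨fun x => a / 2 * Real.sign (α x), by simp [hα], ?_, ?_⟩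
      · apply LipschitzWith.of_dist_le_mul
        intro x y
        rcases eq_or_ne x y with rfl | h
        · simp
        · have hsx : |Real.sign (α x)| ≤ 1 := by
            rcases lt_trichotomy (α x) 0 with h'|h'|h' <;>
              simp [Real.sign_of_neg, Real.sign_of_pos, h']
          have hsy : |Real.sign (α y)| ≤ 1 := by
            rcases lt_trichotomy (α y) 0 with h'|h'|h' <;>
              simp [Real.sign_of_neg, Real.sign_of_pos, h']
          have hxy : a ≤ dist x y := (hd x y h).1
          have : dist (a / 2 * Real.sign (α x)) (a / 2 * Real.sign (α y)) ≤ a := by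
            rw [Real.dist_eq]
            have : |a / 2 * Real.sign (α x) - a / 2 * Real.sign (α y)|
                ≤ |a / 2 * Real.sign (α x)| + |a / 2 * Real.sign (α y)| :=
              abs_sub _ _
            have h1 : |a / 2 * Real.sign (α x)| ≤ a / 2 := by
              rw [abs_mul, abs_of_nonneg (by linarith : (0:ℝ) ≤ a / 2)]
              nlinarith
            have h2 : |a / 2 * Real.sign (α y)| ≤ a / 2 := by
              rw [abs_mul, abs_of_nonneg (by linarith : (0:ℝ) ≤ a / 2)]
              nlinarith
            linarith
          simp only [NNReal.coe_one, one_mul]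
          linarith [this]
      · rw [Finset.mul_sum]
        apply Finset.sum_congr rfl
        intro x _
        have : α x * Real.sign (α x) = |α x| := by
          rcases lt_trichotomy (α x) 0 with h'|h'|h' <;>
            simp [Real.sign_of_neg, Real.sign_of_pos, h', abs_of_neg, abs_of_pos]
        ring_nf
        nlinarith [this]
    exact le_csSup hbdd hg
  · -- upper bound
    have hne : S.Nonempty := ⟨0, fun _ => 0, rfl,
      LipschitzWith.of_dist_le_mul (fun x y => by simp [dist_nonneg]), by simp⟩
    exact csSup_le hne key
end

section
/- Every ultrametric space (M,d) is purely 1-unrectifiable: there is no compact set K ⊆ ℝ of positive Lebesgue measure, no constant C > 0 and no map φ : K → M with C⁻¹|s−t| ≤ d(φ(s),φ(t)) ≤ C|s−t| for all s,t ∈ K. -/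
open MeasureTheory Filter Metric Set

/-- Every ultrametric space is purely `1`-unrectifiable: there is no compact set
`K ⊆ ℝ` of positive Lebesgue measure, no `C > 0` and no map `φ : K → M` with
`C⁻¹|s−t| ≤ d(φ s, φ t) ≤ C|s−t|` on `K`. -/
theorem ultrametric_purely_one_unrectifiable
    {M : Type*} [MetricSpace M]
    (hultra : ∀ x y w : M, dist x w ≤ max (dist x y) (dist y w)) :
    ¬ ∃ K : Set ℝ, IsCompact K ∧ 0 < MeasureTheory.volume K ∧
        ∃ C : ℝ, 0 < C ∧ ∃ φ : ℝ → M, ∀ s ∈ K, ∀ t ∈ K,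
          C⁻¹ * |s - t| ≤ dist (φ s) (φ t) ∧ dist (φ s) (φ t) ≤ C * |s - t| := by
  rintro ⟨K, hK, hKpos, C, hC, φ, hφ⟩
  -- chain lemma in ultrametric spaces
  have chain : ∀ (x : ℕ → M) (B : ℝ), 0 ≤ B → ∀ n : ℕ,
      (∀ i < n, dist (x i) (x (i + 1)) ≤ B) → dist (x 0) (x n) ≤ B := by
    intro x B hB n
    induction n with
    | zero => intro _; simpa using hB
    | succ n ih =>
      intro h
      calc dist (x 0) (x (n + 1)) ≤ max (dist (x 0) (x n)) (dist (x n) (x (n + 1))) :=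
            hultra _ _ _
        _ ≤ B := max_le (ih fun i hi => h i (hi.trans (Nat.lt_succ_self n)))
            (h n (Nat.lt_succ_self n))
  -- density point
  have hmeas : MeasurableSet K := hK.measurableSet
  have hne : volume.restrict K ≠ 0 := by
    intro h
    rw [← Measure.restrict_apply_self, h] at hKpos
    simp at hKpos
  have : NeBot (ae (volume.restrict K)) := ae_neBot.2 hne
  obtain ⟨a, ha⟩ := (Besicovitch.ae_tendsto_measure_inter_div (volume : Measure ℝ) K).exists
  -- parameters
  obtain ⟨n, hn⟩ := exists_nat_gt (2 * C ^ 2)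
  have hnpos : (0 : ℝ) < n := lt_of_le_of_lt (by positivity) hn
  obtain ⟨δ, hδdef⟩ : ∃ δ : ℝ, δ = 1 / (8 * (C ^ 2 + 1)) := ⟨_, rfl⟩
  have hδpos : 0 < δ := by rw [hδdef]; positivity
  have hδ8 : δ ≤ 1 / 8 := by
    rw [hδdef, div_le_div_iff₀ (by positivity) (by norm_num)]
    nlinarith [sq_nonneg C]
  have hδ1 : δ < 1 := by linarith
  have hCδ : C ^ 2 * δ < 1 / 8 := by
    rw [hδdef, mul_one_div, div_lt_div_iff₀ (by positivity) (by norm_num)]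
    nlinarith [sq_nonneg C]
  -- choose a good radius
  have h1δ : ENNReal.ofReal (1 - δ) < 1 := by
    rw [← ENNReal.ofReal_one]
    exact (ENNReal.ofReal_lt_ofReal_iff_of_nonneg (by linarith)).2 (by linarith)
  obtain ⟨r, hrK, hr⟩ := ((ha.eventually (eventually_gt_nhds h1δ)).and
    self_mem_nhdsWithin).exists
  obtain ⟨L, hLdef⟩ : ∃ L : ℝ, L = 2 * r := ⟨_, rfl⟩
  have hr : 0 < r := hr
  have hL : 0 < L := by rw [hLdef]; positivity
  have hvolI : volume (closedBall a r) = ENNReal.ofReal L := by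
    rw [hLdef]; exact Real.volume_closedBall a r
  -- measure of K inside the ball
  have hKI : ENNReal.ofReal ((1 - δ) * L) < volume (K ∩ closedBall a r) := by
    have h := ENNReal.mul_lt_of_lt_div hrK
    rwa [hvolI, ← ENNReal.ofReal_mul (by linarith)] at h
  -- grid points and windows
  obtain ⟨t, htdef⟩ : ∃ t : ℝ, t = (L - δ * L) / n := ⟨_, rfl⟩
  have hstep : 0 ≤ t := by
    rw [htdef]; exact div_nonneg (by nlinarith) hnpos.le
  have hstepL : t ≤ L / n := by
    rw [htdef]
    gcongr
    nlinarith
  obtain ⟨p, hpdef⟩ : ∃ p : ℕ → ℝ, p = fun j : ℕ => (a - r) + (j : ℝ) * t := ⟨_, rfl⟩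
  have hnt : (n : ℝ) * t = L - δ * L := by rw [htdef]; field_simp
  -- each window contains a point of K
  have hwin : ∀ j ≤ n, ∃ s, s ∈ K ∧ s ∈ Icc (p j) (p j + δ * L) := by
    intro j hj
    by_contra hcon
    push_neg at hcon
    have hjt : (j : ℝ) * t ≤ L - δ * L := by
      have hjn : (j : ℝ) ≤ n := Nat.cast_le.2 hj
      have h1 : (j : ℝ) * t ≤ (n : ℝ) * t := mul_le_mul_of_nonneg_right hjn hstep
      linarith
    have hWI : Icc (p j) (p j + δ * L) ⊆ closedBall a r := by
      rw [Real.closedBall_eq_Icc]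
      apply Icc_subset_Icc
      · have h0 : 0 ≤ (j : ℝ) * t := mul_nonneg (Nat.cast_nonneg j) hstep
        simp only [hpdef]; linarith
      · simp only [hpdef]; rw [hLdef] at *; linarith
    have hdisj : Disjoint (Icc (p j) (p j + δ * L)) (K ∩ closedBall a r) := by
      rw [Set.disjoint_iff]
      rintro x ⟨hx1, hx2, _⟩
      exact hcon x hx2 hx1
    have hunion : volume (Icc (p j) (p j + δ * L)) + volume (K ∩ closedBall a r)
        ≤ volume (closedBall a r) := by
      rw [← measure_union hdisj (hmeas.inter measurableSet_closedBall)]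
      exact measure_mono (Set.union_subset hWI Set.inter_subset_right)
    rw [Real.volume_Icc, hvolI] at hunion
    have hlt : ENNReal.ofReal (p j + δ * L - p j) + ENNReal.ofReal ((1 - δ) * L)
        < ENNReal.ofReal L :=
      lt_of_lt_of_le (ENNReal.add_lt_add_left (by simp) hKI) hunion
    rw [← ENNReal.ofReal_add (by nlinarith) (by nlinarith)] at hlt
    have := (ENNReal.ofReal_lt_ofReal_iff (by linarith)).1 hlt
    nlinarith
  choose! s hsK hsW using hwin
  -- apply the chain lemma
  obtain ⟨B, hBdef⟩ : ∃ B : ℝ, B = C * (L / n + δ * L) := ⟨_, rfl⟩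
  have hLn : 0 < L / n := div_pos hL hnpos
  have hBnn : 0 ≤ B := by rw [hBdef]; exact mul_nonneg hC.le (by nlinarith)
  have hkey : dist (φ (s 0)) (φ (s n)) ≤ B := by
    refine chain (fun j => φ (s j)) B hBnn n ?_
    intro i hi
    obtain ⟨hi1, hi2⟩ := hsW i hi.le
    obtain ⟨hj1, hj2⟩ := hsW (i + 1) hi
    have hpi : p (i + 1) = p i + t := by simp only [hpdef]; push_cast; ring
    refine le_trans (hφ _ (hsK i hi.le) _ (hsK (i + 1) hi)).2 ?_
    rw [hBdef]
    refine mul_le_mul_of_nonneg_left ?_ hC.le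
    rw [abs_sub_le_iff]
    rw [hpi] at hj1 hj2
    constructor <;> linarith
  -- lower bound on |s 0 - s n|
  obtain ⟨h01, h02⟩ := hsW 0 (Nat.zero_le n)
  have hnn := hsW n le_rfl
  have hp0 : p 0 = a - r := by simp [hpdef]
  have hpn : p n = (a - r) + (L - δ * L) := by simp only [hpdef]; rw [← hnt]
  have hsn : L - 2 * (δ * L) ≤ s n - s 0 := by
    have h1 := hnn.1
    rw [hpn] at h1
    rw [hp0] at h02
    linarith
  have hlow := (hφ _ (hsK 0 (Nat.zero_le n)) _ (hsK n le_rfl)).1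
  have habs : L - 2 * (δ * L) ≤ |s 0 - s n| := by
    rw [abs_sub_comm]
    exact hsn.trans (le_abs_self _)
  -- contradiction
  have hfin : C⁻¹ * (L - 2 * (δ * L)) ≤ B :=
    le_trans (mul_le_mul_of_nonneg_left habs (by positivity)) (hlow.trans hkey)
  rw [hBdef, inv_mul_le_iff₀ hC] at hfin
  have hmul : L - 2 * (δ * L) ≤ C ^ 2 * (L / n) + C ^ 2 * δ * L :=
    hfin.trans_eq (by ring)
  have hC2n : C ^ 2 * (L / n) < L / 2 := by
    rw [mul_div_assoc', div_lt_div_iff₀ hnpos (by norm_num)]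
    linarith [mul_lt_mul_of_pos_right hn hL]
  have e1 : C ^ 2 * δ * L < 1 / 8 * L := mul_lt_mul_of_pos_right hCδ hL
  have e2 : δ * L ≤ 1 / 8 * L := mul_le_mul_of_nonneg_right hδ8 hL.le
  linarith
end

section
/- Let K ⊆ ℝ be a compact set of positive Lebesgue measure and let d be a metric on K such that (K,d) is ultrametric and d(x,y) ≤ |x−y| for all x,y ∈ K. Then for every ε > 0 there exist x,y ∈ K with x ≠ y and d(x,y) < ε·|x−y|. -/
open MeasureTheory Metric Set Filter Topology

/-- Chain lemma: if `K` is closed, `a ≤ b` in `K`, and every subinterval of `[a,b]` of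
length `δ` meets `K` (strictly to the right of its left endpoint), then `d a b ≤ δ`. -/
lemma ultra_chain_aux (K : Set ℝ) (hKc : IsClosed K) (d : ℝ → ℝ → ℝ)
    (hd0 : ∀ x ∈ K, d x x = 0)
    (hultra : ∀ x ∈ K, ∀ y ∈ K, ∀ w ∈ K, d x w ≤ max (d x y) (d y w))
    (hdle : ∀ x ∈ K, ∀ y ∈ K, d x y ≤ |x - y|)
    {a b δ : ℝ} (ha : a ∈ K) (hb : b ∈ K) (hab : a ≤ b) (hδ : 0 < δ)
    (gap : ∀ u, a ≤ u → u + δ ≤ b → ∃ z ∈ K, u < z ∧ z ≤ u + δ) :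
    d a b ≤ δ := by
  set S : Set ℝ := {y | y ∈ K ∧ y ∈ Icc a b ∧ d a y ≤ δ} with hS
  have haS : a ∈ S := ⟨ha, ⟨le_refl a, hab⟩, by rw [hd0 a ha]; exact hδ.le⟩
  have hSne : S.Nonempty := ⟨a, haS⟩
  have hSbdd : BddAbove S := ⟨b, fun y hy => hy.2.1.2⟩
  set c : ℝ := sSup S with hc
  have hcK : c ∈ K := by
    have h1 : c ∈ closure S := csSup_mem_closure hSne hSbdd
    have h2 : closure S ⊆ closure K := closure_mono (fun y hy => hy.1)
    rw [hKc.closure_eq] at h2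
    exact h2 h1
  have hac : a ≤ c := le_csSup hSbdd haS
  have hcb : c ≤ b := csSup_le hSne (fun y hy => hy.2.1.2)
  -- c ∈ S
  have hcS : d a c ≤ δ := by
    obtain ⟨y, hyS, hy⟩ := exists_lt_of_lt_csSup hSne (show c - δ < c by linarith)
    have hyc : y ≤ c := le_csSup hSbdd hyS
    have hdyc : d y c ≤ δ := by
      have := hdle y hyS.1 c hcK
      rw [abs_sub_comm, abs_of_nonneg (by linarith)] at this
      linarith
    have := hultra a ha y hyS.1 c hcK
    exact this.trans (max_le hyS.2.2 hdyc)
  rcases lt_or_ge c b with hlt | hge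
  · rcases le_or_gt b (c + δ) with hbc | hbc
    · -- b within δ of c
      have hdcb : d c b ≤ δ := by
        have := hdle c hcK b hb
        rw [abs_sub_comm, abs_of_nonneg (by linarith)] at this
        linarith
      exact (hultra a ha c hcK b hb).trans (max_le hcS hdcb)
    · -- gap gives a point of S above c, contradiction
      obtain ⟨z, hzK, hz1, hz2⟩ := gap c hac (by linarith)
      have hdcz : d c z ≤ δ := by
        have := hdle c hcK z hzK
        rw [abs_sub_comm, abs_of_nonneg (by linarith)] at this
        linarith
      have hzS : z ∈ S := ⟨hzK, ⟨by linarith, by linarith⟩,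
        (hultra a ha c hcK z hzK).trans (max_le hcS hdcz)⟩
      have := le_csSup hSbdd hzS
      linarith
  · have : c = b := le_antisymm hcb hge
    rwa [this] at hcS

/-- If `K ⊆ ℝ` is compact of positive Lebesgue measure and `d` is an ultrametric on `K`
with `d(x,y) ≤ |x−y|`, then for every `ε > 0` there are `x ≠ y` in `K` with
`d(x,y) < ε·|x−y|`. -/
theorem ultrametric_on_compact_contracts
    (K : Set ℝ) (hK : IsCompact K) (hpos : 0 < MeasureTheory.volume K)
    (d : ℝ → ℝ → ℝ)
    (hd0 : ∀ x ∈ K, d x x = 0)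
    (hdpos : ∀ x ∈ K, ∀ y ∈ K, x ≠ y → 0 < d x y)
    (hdsymm : ∀ x ∈ K, ∀ y ∈ K, d x y = d y x)
    (hultra : ∀ x ∈ K, ∀ y ∈ K, ∀ w ∈ K, d x w ≤ max (d x y) (d y w))
    (hdle : ∀ x ∈ K, ∀ y ∈ K, d x y ≤ |x - y|)
    (ε : ℝ) (hε : 0 < ε) :
    ∃ x ∈ K, ∃ y ∈ K, x ≠ y ∧ d x y < ε * |x - y| := by
  -- choose a small parameter η
  set η : ℝ := min (ε / 12) (1 / 6) with hη
  have hη0 : 0 < η := lt_min (by linarith) (by norm_num)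
  have hη6 : η ≤ 1 / 6 := min_le_right _ _
  have hηε : η ≤ ε / 12 := min_le_left _ _
  -- density point
  have hmeas : MeasurableSet K := hK.measurableSet
  have hrestr : volume.restrict K ≠ 0 := by
    intro h
    have : (volume.restrict K) Set.univ = 0 := by rw [h]; rfl
    rw [Measure.restrict_apply_univ] at this
    exact hpos.ne' this
  have hae : ∀ᵐ x ∂volume.restrict K,
      Tendsto (fun r => volume (K ∩ closedBall x r) / volume (closedBall x r))
        (𝓝[>] 0) (𝓝 1) := Besicovitch.ae_tendsto_measure_inter_div volume K
  have hmem : ∀ᵐ x ∂volume.restrict K, x ∈ K := ae_restrict_mem hmeas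
  have hne : (MeasureTheory.ae (volume.restrict K)).NeBot := ae_neBot.2 hrestr
  obtain ⟨x, hxT, hxK⟩ := (hae.and hmem).exists
  -- get r with high density
  have hlt1 : ENNReal.ofReal (1 - η) < 1 := by
    rw [← ENNReal.ofReal_one]
    exact ENNReal.ofReal_lt_ofReal_iff_of_nonneg (by linarith) |>.2 (by linarith)
  have hev : ∀ᶠ r in 𝓝[>] (0 : ℝ),
      ENNReal.ofReal (1 - η) < volume (K ∩ closedBall x r) / volume (closedBall x r) :=
    hxT.eventually (eventually_gt_nhds hlt1)
  obtain ⟨r, hrd, hrpos⟩ := (hev.and self_mem_nhdsWithin).exists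
  have hr : 0 < r := hrpos
  -- translate to a real inequality on m = volume (K ∩ closedBall x r)
  have hball : volume (closedBall x r) = ENNReal.ofReal (2 * r) := Real.volume_closedBall x r
  have hfin : volume (K ∩ closedBall x r) ≠ ⊤ := by
    refine ne_top_of_le_ne_top ?_ (measure_mono Set.inter_subset_right)
    rw [hball]; exact ENNReal.ofReal_ne_top
  have hlow : ENNReal.ofReal ((1 - η) * (2 * r)) < volume (K ∩ closedBall x r) := by
    have := hrd
    rw [hball, ENNReal.lt_div_iff_mul_lt (Or.inl (by positivity)) (Or.inl ENNReal.ofReal_ne_top),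
      ← ENNReal.ofReal_mul (by linarith)] at this
    exact this
  set δ : ℝ := 3 * η * r with hδdef
  have hδ0 : 0 < δ := by positivity
  -- gap property: every subinterval of [x-r, x+r] of length δ meets K strictly
  have gap : ∀ u, x - r ≤ u → u + δ ≤ x + r → ∃ z ∈ K, u < z ∧ z ≤ u + δ := by
    intro u hu1 hu2
    by_contra hcon
    push_neg at hcon
    have hdisj : K ∩ Ioc u (u + δ) = ∅ := by
      ext z; simp only [Set.mem_inter_iff, Set.mem_Ioc, Set.mem_empty_iff_false, iff_false]
      rintro ⟨hz, h1, h2⟩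
      exact absurd h2 (not_le.2 (hcon z hz h1))
    have hsub : K ∩ closedBall x r ⊆ Icc (x - r) (x + r) \ Ioc u (u + δ) := by
      intro z hz
      refine ⟨?_, fun hzI => ?_⟩
      · rw [← Real.closedBall_eq_Icc]; exact hz.2
      have : z ∈ K ∩ Ioc u (u + δ) := ⟨hz.1, hzI⟩
      rw [hdisj] at this; exact this
    have hvol : volume (Icc (x - r) (x + r) \ Ioc u (u + δ)) =
        ENNReal.ofReal (2 * r) - ENNReal.ofReal δ := by
      rw [measure_diff (by intro z hz; exact ⟨by linarith [hz.1], by linarith [hz.2]⟩)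
          measurableSet_Ioc.nullMeasurableSet (by simp [Real.volume_Ioc])]
      rw [Real.volume_Icc, Real.volume_Ioc]
      congr 1 <;> ring_nf
    have h1 : volume (K ∩ closedBall x r) ≤ ENNReal.ofReal (2 * r - δ) := by
      refine (measure_mono hsub).trans_eq ?_
      rw [hvol, ← ENNReal.ofReal_sub _ hδ0.le]
    have h2 : ENNReal.ofReal ((1 - η) * (2 * r)) < ENNReal.ofReal (2 * r - δ) :=
      hlow.trans_le h1
    rw [ENNReal.ofReal_lt_ofReal_iff_of_nonneg (by nlinarith)] at h2
    nlinarith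
  -- pick a and b near the endpoints
  obtain ⟨a, haK, ha1, ha2⟩ := gap (x - r) (le_refl _) (by nlinarith)
  obtain ⟨b, hbK, hb1, hb2⟩ := gap (x + r - δ) (by nlinarith) (by linarith)
  have hba : r ≤ b - a := by nlinarith
  have hab : a < b := by nlinarith
  -- chain lemma on [a, b]
  have hdab : d a b ≤ δ :=
    ultra_chain_aux K hK.isClosed d hd0 hultra hdle haK hbK hab.le hδ0
      (fun u hu1 hu2 => gap u (by linarith) (by linarith))
  refine ⟨a, haK, b, hbK, hab.ne, ?_⟩
  rw [abs_sub_comm, abs_of_nonneg (by linarith)]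
  have : δ < ε * r := by nlinarith
  nlinarith
end
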